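/- arXiv:1610.02835 — 10 statements merged into one kernel-verified Lean document; each statement's English description precedes it below -/
import Mathlib

section
/- Suppose a : ℕ → ℝ is an increasing sequence with a(n) → ∞, k and the resolvent r are summable, and x is the solution of the Volterra summation equation. Then: (a) Λ_a|x| = 0 if and only if Λ_a|H| = 0; (b) Λ_a|x| ∈ (0,∞) if and only if Λ_a|H| ∈ (0,∞); (c) Λ_a|x| = +∞ if and only if Λ_a|H| = +∞. -/
open Filter Finset

/-- `r` is the resolvent of the kernel `k`:
`r(0) = 1` and `r(n+1) = Σ_{j=0}^n k(n−j) r(j)`. -/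
def IsResolvent (k r : ℕ → ℝ) : Prop :=
  r 0 = 1 ∧ ∀ n : ℕ, r (n + 1) = ∑ j ∈ Finset.range (n + 1), k (n - j) * r j

/-- `x` solves the Volterra summation equation
`x(n+1) = Σ_{j=0}^n k(n−j) x(j) + H(n+1)`. -/
def IsVolterraSol (k H x : ℕ → ℝ) : Prop :=
  ∀ n : ℕ, x (n + 1) = (∑ j ∈ Finset.range (n + 1), k (n - j) * x j) + H (n + 1)

/-- `Λ_a|y| = limsup_{n→∞} |y(n)|/a(n)`, computed in the extended reals. -/
noncomputable def Lam (a y : ℕ → ℝ) : EReal :=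
  Filter.limsup (fun n => ((|y n| / a n : ℝ) : EReal)) atTop

/-! Generating functions turn the resolvent identity into `R = 1 + X K R` and the equation into
`Xₓ = x(0) - H(0) + X K Xₓ + H`, so `x = (x(0) - H(0)) r + r ∗ H`; conversely
`H(n+1) = x(n+1) - (k ∗ x)(n)`. Convolution with a summable kernel `c` multiplies the growth
rate relative to `a` by at most `‖c‖₁`: the first terms are swamped by `a(n) → ∞`, and the later
ones are bounded by `M a(j) ≤ M a(n)`. Hence `Λ_a|x| ≤ ‖r‖₁ Λ_a|H|` and
`Λ_a|H| ≤ (1 + ‖k‖₁) Λ_a|x|`, and two quantities in `[0, ∞]`, each at most a finite positive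
multiple of the other, vanish together and are infinite together. -/

open PowerSeries

def discreteConv (c z : ℕ → ℝ) (n : ℕ) : ℝ :=
  ∑ j ∈ range (n + 1), c (n - j) * z j

theorem coeff_mk_mul_mk (c z : ℕ → ℝ) (n : ℕ) :
    coeff n (PowerSeries.mk c * PowerSeries.mk z) = discreteConv c z n := by
  rw [mul_comm, coeff_mul, Nat.sum_antidiagonal_eq_sum_range_succ
    (fun i j => coeff i (PowerSeries.mk z) * coeff j (PowerSeries.mk c))]
  simp [discreteConv, mul_comm]

theorem IsVolterraSol.eq_resolvent_add_discreteConv {k r H x : ℕ → ℝ}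
    (hx : IsVolterraSol k H x) (hres : IsResolvent k r) (n : ℕ) :
    x n = (x 0 - H 0) * r n + discreteConv r H n := by
  have hr : PowerSeries.mk r = 1 + X * (PowerSeries.mk k * PowerSeries.mk r) := by
    ext (_ | n) <;> simp [coeff_mk_mul_mk, hres.1, hres.2, discreteConv]
  have hx' : PowerSeries.mk x =
      C (x 0 - H 0) + X * (PowerSeries.mk k * PowerSeries.mk x) + PowerSeries.mk H := by
    ext (_ | n) <;> simp [coeff_mk_mul_mk, hx n, discreteConv]
  have hxr : PowerSeries.mk x =
      PowerSeries.mk r * C (x 0 - H 0) + PowerSeries.mk r * PowerSeries.mk H := by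
    linear_combination PowerSeries.mk r * hx' - PowerSeries.mk x * hr
  have := congrArg (coeff n) hxr
  rwa [map_add, coeff_mul_C, coeff_mk_mul_mk, coeff_mk, coeff_mk, mul_comm] at this

theorem sum_range_abs_le_tsum {c : ℕ → ℝ} (hc : Summable fun j => |c j|) (n : ℕ) :
    ∑ j ∈ range (n + 1), |c (n - j)| ≤ ∑' j, |c j| := by
  calc ∑ j ∈ range (n + 1), |c (n - j)| = ∑ j ∈ range (n + 1), |c j| := by
        simpa using sum_range_reflect (fun j => |c j|) (n + 1)
    _ ≤ ∑' j, |c j| := hc.sum_le_tsum _ fun _ _ => abs_nonneg _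

theorem abs_discreteConv_le {c z : ℕ → ℝ} (hc : Summable fun j => |c j|) {n : ℕ} {B : ℝ}
    (hz : ∀ j ≤ n, |z j| ≤ B) : |discreteConv c z n| ≤ (∑' j, |c j|) * B := calc
  |discreteConv c z n| ≤ ∑ j ∈ range (n + 1), |c (n - j)| * B := by
    refine (abs_sum_le_sum_abs _ _).trans (sum_le_sum fun j hj => ?_)
    rw [abs_mul]
    exact mul_le_mul_of_nonneg_left (hz j (Nat.lt_succ_iff.mp (mem_range.mp hj))) (abs_nonneg _)
  _ ≤ (∑' j, |c j|) * B := by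
    rw [← sum_mul]
    exact mul_le_mul_of_nonneg_right (sum_range_abs_le_tsum hc n)
      ((abs_nonneg _).trans (hz 0 n.zero_le))

theorem eventually_forall_abs_le_add_mul {a z : ℕ → ℝ} (ha : Monotone a)
    (ha' : Tendsto a atTop atTop) {M : ℝ} (hM : 0 ≤ M) (hz : ∀ᶠ n in atTop, |z n| ≤ M * a n) :
    ∃ B, ∀ᶠ n in atTop, ∀ j ≤ n, |z j| ≤ B + M * a n := by
  obtain ⟨N, hN⟩ := eventually_atTop.mp hz
  have hB : 0 ≤ ∑ j ∈ range N, |z j| := sum_nonneg fun _ _ => abs_nonneg _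
  refine ⟨∑ j ∈ range N, |z j|, ?_⟩
  filter_upwards [ha'.eventually_ge_atTop 0] with n han j hjn
  rcases lt_or_ge j N with hjN | hjN
  · have := single_le_sum (fun i _ => abs_nonneg (z i)) (mem_range.mpr hjN)
    nlinarith
  · nlinarith [hN j hjN, ha hjn]

theorem eventually_abs_discreteConv_le {a c z : ℕ → ℝ} (ha : Monotone a)
    (ha' : Tendsto a atTop atTop) (hc : Summable fun j => |c j|) {M ε : ℝ} (hM : 0 ≤ M)
    (hε : 0 < ε) (hz : ∀ᶠ n in atTop, |z n| ≤ M * a n) :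
    ∀ᶠ n in atTop, |discreteConv c z n| ≤ ((∑' j, |c j|) * M + ε) * a n := by
  obtain ⟨B, hB⟩ := eventually_forall_abs_le_add_mul ha ha' hM hz
  filter_upwards [hB, (ha'.const_mul_atTop hε).eventually_ge_atTop ((∑' j, |c j|) * B)]
    with n hzn hBn
  calc |discreteConv c z n| ≤ (∑' j, |c j|) * (B + M * a n) := abs_discreteConv_le hc hzn
    _ ≤ ((∑' j, |c j|) * M + ε) * a n := by linarith

theorem Lam_nonneg {a : ℕ → ℝ} (ha' : Tendsto a atTop atTop) (y : ℕ → ℝ) : 0 ≤ Lam a y :=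
  le_limsup_of_frequently_le (((ha'.eventually_gt_atTop 0).mono fun n hn => by
    exact_mod_cast div_nonneg (abs_nonneg (y n)) hn.le).frequently) (by isBoundedDefault)

theorem Lam_le_of_eventually_le {a y : ℕ → ℝ} (ha' : Tendsto a atTop atTop) {C : ℝ}
    (h : ∀ᶠ n in atTop, |y n| ≤ C * a n) : Lam a y ≤ C :=
  limsup_le_of_le (by isBoundedDefault) <| by
    filter_upwards [h, ha'.eventually_gt_atTop 0] with n hyn han
    exact_mod_cast (div_le_iff₀ han).mpr hyn

theorem eventually_le_of_Lam_lt {a y : ℕ → ℝ} (ha' : Tendsto a atTop atTop) {C : ℝ}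
    (h : Lam a y < C) : ∀ᶠ n in atTop, |y n| ≤ C * a n := by
  filter_upwards [eventually_lt_of_limsup_lt h, ha'.eventually_gt_atTop 0] with n hyn han
  exact ((div_lt_iff₀ han).mp (mod_cast hyn)).le

-- `C > 0` is needed since `0 * ⊤ = 0` in `EReal`.
theorem Lam_le_coe_mul {a y z : ℕ → ℝ} (ha' : Tendsto a atTop atTop) {C : ℝ} (hC : 0 < C)
    (h : ∀ M ε : ℝ, 0 < M → 0 < ε → (∀ᶠ n in atTop, |z n| ≤ M * a n) →
      ∀ᶠ n in atTop, |y n| ≤ (C * M + ε) * a n) :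
    Lam a y ≤ C * Lam a z := by
  refine EReal.le_of_forall_lt_iff_le.mp fun t ht => ?_
  have hzt : Lam a z < (t / C : ℝ) := by
    rw [EReal.coe_div, EReal.lt_div_iff (mod_cast hC) (EReal.coe_ne_top C), mul_comm]
    exact ht
  obtain ⟨M, hzM, hMt⟩ := EReal.lt_iff_exists_real_btwn.mp hzt
  have hM : 0 < M := mod_cast (Lam_nonneg ha' z).trans_lt hzM
  have hCM : C * M < t := by
    have := (lt_div_iff₀ hC).mp (mod_cast hMt : M < t / C)
    linarith
  have := Lam_le_of_eventually_le ha'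
    (h M (t - C * M) hM (by linarith) (eventually_le_of_Lam_lt ha' hzM))
  simpa using this

theorem IsVolterraSol.Lam_le_resolvent_mul {k r H x a : ℕ → ℝ} (hx : IsVolterraSol k H x)
    (hres : IsResolvent k r) (hrs : Summable fun j => |r j|) (ha : Monotone a)
    (ha' : Tendsto a atTop atTop) :
    Lam a x ≤ (∑' j, |r j| : ℝ) * Lam a H := by
  have hr0 : 1 ≤ ∑' j, |r j| := by
    simpa [hres.1] using hrs.le_tsum 0 fun _ _ => abs_nonneg _
  refine Lam_le_coe_mul ha' (by linarith) fun M ε hM hε hH => ?_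
  have hr : ∀ n, |r n| ≤ ∑' j, |r j| := fun n => hrs.le_tsum n fun _ _ => abs_nonneg _
  filter_upwards [eventually_abs_discreteConv_le ha ha' hrs hM.le (half_pos hε) hH,
    (ha'.const_mul_atTop (half_pos hε)).eventually_ge_atTop (|x 0 - H 0| * ∑' j, |r j|)]
    with n hconv hconst
  calc |x n| ≤ |x 0 - H 0| * |r n| + |discreteConv r H n| := by
        rw [hx.eq_resolvent_add_discreteConv hres n, ← abs_mul]
        exact abs_add_le _ _
    _ ≤ ((∑' j, |r j|) * M + ε) * a n := by
        nlinarith [mul_le_mul_of_nonneg_left (hr n) (abs_nonneg (x 0 - H 0))]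

theorem IsVolterraSol.Lam_forcing_le_kernel_mul {k H x a : ℕ → ℝ} (hx : IsVolterraSol k H x)
    (hk : Summable fun j => |k j|) (ha : Monotone a) (ha' : Tendsto a atTop atTop) :
    Lam a H ≤ (1 + ∑' j, |k j| : ℝ) * Lam a x := by
  refine Lam_le_coe_mul ha' (by positivity) fun M ε hM hε hxM => ?_
  rw [← map_add_atTop_eq_nat 1, eventually_map]
  filter_upwards [eventually_abs_discreteConv_le ha ha' hk hM.le hε hxM,
    (tendsto_add_atTop_nat 1).eventually hxM] with n hconv hxn
  have hH : H (n + 1) = x (n + 1) - discreteConv k x n := by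
    rw [hx n, discreteConv]; ring
  have hmono : (_ * M + ε) * a n ≤ _ * a (n + 1) :=
    mul_le_mul_of_nonneg_left (ha n.le_succ) (by positivity : 0 ≤ (∑' j, |k j|) * M + ε)
  calc |H (n + 1)| ≤ |x (n + 1)| + |discreteConv k x n| := hH ▸ abs_sub _ _
    _ ≤ ((1 + ∑' j, |k j|) * M + ε) * a (n + 1) := by linarith

theorem EReal.eq_zero_of_le_coe_mul {u v : EReal} {C : ℝ} (hu : 0 ≤ u) (h : u ≤ C * v)
    (hv : v = 0) : u = 0 :=
  le_antisymm (by simpa [hv] using h) hu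

theorem EReal.ne_top_of_le_coe_mul {u v : EReal} {C : ℝ} (hv : 0 ≤ v) (h : u ≤ C * v)
    (hv' : v ≠ ⊤) : u ≠ ⊤ := by
  lift v to ℝ using ⟨hv', (EReal.bot_lt_zero.trans_le hv).ne'⟩
  exact ne_top_of_le_ne_top (EReal.coe_ne_top (C * v)) (mod_cast h)

theorem EReal.zero_pos_top_iff_of_le_coe_mul {u v : EReal} {C D : ℝ} (hu : 0 ≤ u) (hv : 0 ≤ v)
    (huv : u ≤ C * v) (hvu : v ≤ D * u) :
    (u = 0 ↔ v = 0) ∧ ((0 < u ∧ u < ⊤) ↔ (0 < v ∧ v < ⊤)) ∧ (u = ⊤ ↔ v = ⊤) := by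
  have hzero : u = 0 ↔ v = 0 :=
    ⟨EReal.eq_zero_of_le_coe_mul hv hvu, EReal.eq_zero_of_le_coe_mul hu huv⟩
  have htop : u = ⊤ ↔ v = ⊤ :=
    ⟨not_imp_not.mp (EReal.ne_top_of_le_coe_mul hv huv),
      not_imp_not.mp (EReal.ne_top_of_le_coe_mul hu hvu)⟩
  refine ⟨hzero, ?_, htop⟩
  rw [hu.lt_iff_ne', hv.lt_iff_ne', lt_top_iff_ne_top, lt_top_iff_ne_top]
  exact and_congr hzero.not htop.not

theorem stmt7_general (k r H x : ℕ → ℝ)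
    (a : ℕ → ℝ) (ha : StrictMono a) (ha' : Tendsto a atTop atTop)
    (hk : Summable fun j => |k j|)
    (hres : IsResolvent k r) (hrs : Summable fun j => |r j|)
    (hx : IsVolterraSol k H x) :
    (Lam a x = 0 ↔ Lam a H = 0) ∧
    ((0 < Lam a x ∧ Lam a x < ⊤) ↔ (0 < Lam a H ∧ Lam a H < ⊤)) ∧
    (Lam a x = ⊤ ↔ Lam a H = ⊤) :=
  EReal.zero_pos_top_iff_of_le_coe_mul (Lam_nonneg ha' x) (Lam_nonneg ha' H)
    (hx.Lam_le_resolvent_mul hres hrs ha.monotone ha')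
    (hx.Lam_forcing_le_kernel_mul hk ha.monotone ha')

theorem stmt7 (k r H x : ℕ → ℝ) (ξ : ℝ)
    (a : ℕ → ℝ) (ha : StrictMono a) (ha' : Tendsto a atTop atTop)
    (hk : Summable fun j => |k j|)
    (hres : IsResolvent k r) (hrs : Summable fun j => |r j|)
    (hx0 : x 0 = ξ) (hx : IsVolterraSol k H x) :
    (Lam a x = 0 ↔ Lam a H = 0) ∧
    ((0 < Lam a x ∧ Lam a x < ⊤) ↔ (0 < Lam a H ∧ Lam a H < ⊤)) ∧
    (Lam a x = ⊤ ↔ Lam a H = ⊤) :=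
  stmt7_general k r H x a ha ha' hk hres hrs hx
end

section
/- Suppose a : ℕ → ℝ is an increasing sequence with a(n) → ∞, k and the resolvent r are summable, x is the solution of the Volterra summation equation, and Λ_a|H| < ∞. Then Λ_a|x| ≤ (Σ_{j=0}^∞ |r(j)|) · Λ_a|H|. -/
open Filter Finset

lemma voc (k r H x : ℕ → ℝ) (ξ : ℝ) (hres : IsResolvent k r) (hx0 : x 0 = ξ)
    (hx : IsVolterraSol k H x) :
    ∀ n, x n = r n * ξ + ∑ j ∈ Finset.range n, r (n - 1 - j) * H (j + 1) := by
  intro n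
  induction n using Nat.strong_induction_on with
  | _ n ih =>
    match n with
    | 0 => simp [hx0, hres.1]
    | (m+1) =>
      rw [hx m]
      have hsum : ∑ j ∈ Finset.range (m + 1), k (m - j) * x j
          = (∑ j ∈ Finset.range (m + 1), k (m - j) * r j) * ξ
            + ∑ j ∈ Finset.range (m + 1), ∑ i ∈ Finset.range j,
                k (m - j) * (r (j - 1 - i) * H (i + 1)) := by
        have : ∀ j ∈ Finset.range (m + 1), k (m - j) * x j
            = k (m - j) * r j * ξ + ∑ i ∈ Finset.range j,
                k (m - j) * (r (j - 1 - i) * H (i + 1)) := by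
          intro j hj
          rw [ih j (Finset.mem_range.mp hj), mul_add, Finset.mul_sum]
          ring_nf
        rw [Finset.sum_congr rfl this, Finset.sum_add_distrib, Finset.sum_mul]
      rw [hsum, ← hres.2 m]
      have hswap : ∑ j ∈ Finset.range (m + 1), ∑ i ∈ Finset.range j,
            k (m - j) * (r (j - 1 - i) * H (i + 1))
          = ∑ i ∈ Finset.range (m + 1), ∑ j ∈ Finset.Ico (i + 1) (m + 1),
            k (m - j) * (r (j - 1 - i) * H (i + 1)) := by
        have := Finset.sum_Ico_Ico_comm' 0 (m+1)
          (fun i j => k (m - j) * (r (j - 1 - i) * H (i + 1)))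
        simp only [Nat.Ico_zero_eq_range] at this
        exact this.symm
      rw [hswap]
      have hinner : ∀ i ∈ Finset.range (m + 1),
          ∑ j ∈ Finset.Ico (i + 1) (m + 1), k (m - j) * (r (j - 1 - i) * H (i + 1))
            = (if i < m then r (m - i) * H (i + 1) else 0) := by
        intro i hi
        have hi' := Finset.mem_range.mp hi
        rcases Nat.lt_or_ge i m with him | him
        · simp only [him, if_true]
          rw [Finset.sum_Ico_eq_sum_range]
          have hmi : m + 1 - (i + 1) = m - i := by omega
          rw [hmi]
          have : ∀ t ∈ Finset.range (m - i),
              k (m - (i + 1 + t)) * (r (i + 1 + t - 1 - i) * H (i + 1))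
                = k (m - 1 - i - t) * r t * H (i + 1) := by
            intro t ht
            have h1 : m - (i + 1 + t) = m - 1 - i - t := by omega
            have h2 : i + 1 + t - 1 - i = t := by omega
            rw [h1, h2]; ring
          rw [Finset.sum_congr rfl this, ← Finset.sum_mul]
          have h3 : m - i = (m - 1 - i) + 1 := by omega
          rw [h3, ← hres.2 (m - 1 - i)]
        · have him' : i = m := by omega
          subst him'
          simp
      rw [Finset.sum_congr rfl hinner, Finset.sum_range_succ]
      simp only [lt_irrefl, if_false, add_zero]
      have : ∀ i ∈ Finset.range m, (if i < m then r (m - i) * H (i + 1) else 0)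
          = r (m - i) * H (i + 1) := by
        intro i hi; simp [Finset.mem_range.mp hi]
      rw [Finset.sum_congr rfl this, Finset.sum_range_succ]
      have h4 : ∀ j, m + 1 - 1 - j = m - j := by omega
      simp only [h4, Nat.sub_self, hres.1]
      ring

theorem stmt8 (k r H x : ℕ → ℝ) (ξ : ℝ)
    (a : ℕ → ℝ) (ha : StrictMono a) (ha' : Tendsto a atTop atTop)
    (hk : Summable fun j => |k j|)
    (hres : IsResolvent k r) (hrs : Summable fun j => |r j|)
    (hx0 : x 0 = ξ) (hx : IsVolterraSol k H x)
    (hH : Lam a H < ⊤) :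
    Lam a x ≤ ((∑' j : ℕ, |r j| : ℝ) : EReal) * Lam a H := by
  have hvoc := voc k r H x ξ hres hx0 hx
  set C : ℝ := ∑' j : ℕ, |r j| with hCdef
  have hC0 : 0 ≤ C := tsum_nonneg fun j => abs_nonneg _
  have haev : ∀ᶠ n in atTop, 0 < a n := ha'.eventually_gt_atTop 0
  have hL0 : (0 : EReal) ≤ Lam a H :=
    le_limsup_of_frequently_le ((haev.mono fun n hn =>
      EReal.coe_nonneg.mpr (div_nonneg (abs_nonneg _) hn.le)).frequently)
      (by isBoundedDefault)
  set Lr : ℝ := (Lam a H).toReal with hLrdef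
  have hLH : Lam a H = (Lr : EReal) := (EReal.coe_toReal hH.ne (by
    intro hbot
    rw [hbot] at hL0
    exact absurd hL0 (by simp))).symm
  have hLr0 : 0 ≤ Lr := by
    rw [hLH] at hL0; exact_mod_cast hL0
  rw [hLH, ← EReal.coe_mul]
  -- key epsilon estimate
  have key : ∀ ε : ℝ, 0 < ε → Lam a x ≤ ((C * Lr + ε : ℝ) : EReal) := by
    intro ε hε
    set ε₁ : ℝ := ε / (2 * (C + 1)) with hε₁def
    have hε₁ : 0 < ε₁ := by positivity
    have hHlt : ∀ᶠ n in atTop, ((|H n| / a n : ℝ) : EReal) < ((Lr + ε₁ : ℝ) : EReal) := by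
      refine eventually_lt_of_limsup_lt ?_ (by isBoundedDefault)
      rw [← Lam, hLH]
      exact_mod_cast (by linarith : Lr < Lr + ε₁)
    have hHb : ∀ᶠ n in atTop, |H n| ≤ (Lr + ε₁) * a n ∧ 0 < a n := by
      filter_upwards [hHlt, haev] with n h1 h2
      refine ⟨?_, h2⟩
      have h1' : |H n| / a n < Lr + ε₁ := by exact_mod_cast h1
      exact le_of_lt ((div_lt_iff₀ h2).mp h1')
    obtain ⟨N₁, hN₁⟩ := eventually_atTop.mp hHb
    set N₀ : ℕ := N₁ + 1 with hN₀def
    have hN₀ : ∀ j ≥ N₀, |H j| ≤ (Lr + ε₁) * a j ∧ 0 < a j := fun j hj => hN₁ j (by omega)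
    set M : ℝ := ∑ m ∈ Finset.range N₀, |H m| with hMdef
    have hM0 : 0 ≤ M := Finset.sum_nonneg fun _ _ => abs_nonneg _
    have hMb : ∀ m < N₀, |H m| ≤ M :=
      fun m hm => Finset.single_le_sum (fun i _ => abs_nonneg (H i)) (Finset.mem_range.mpr hm)
    set P : ℕ → ℝ := fun m => ∑ i ∈ Finset.range m, |r i| with hPdef
    have hPC : ∀ m, P m ≤ C := fun m => Summable.sum_le_tsum _ (fun i _ => abs_nonneg _) hrs
    set g : ℕ → ℝ := fun n => |r n| * |ξ| + M * (C - P (n - N₀ + 1)) with hgdef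
    -- pointwise bound for n ≥ N₀
    have hbound : ∀ n, N₀ ≤ n → |x n| ≤ (Lr + ε₁) * C * a n + g n := by
      intro n hn
      have han : 0 < a n := (hN₀ n hn).2
      have h1 : |x n| ≤ |r n| * |ξ| + ∑ j ∈ Finset.range n, |r (n - 1 - j)| * |H (j + 1)| := by
        rw [hvoc n]
        refine (abs_add_le _ _).trans ?_
        rw [abs_mul]
        gcongr
        refine (Finset.abs_sum_le_sum_abs _ _).trans ?_
        apply le_of_eq
        exact Finset.sum_congr rfl fun j _ => abs_mul _ _
      have h2 : ∑ j ∈ Finset.range n, |r (n - 1 - j)| * |H (j + 1)|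
          = ∑ i ∈ Finset.range n, |r i| * |H (n - i)| := by
        rw [← Finset.sum_range_reflect (fun i => |r i| * |H (n - i)|) n]
        refine Finset.sum_congr rfl fun j hj => ?_
        have hj' := Finset.mem_range.mp hj
        have : n - (n - 1 - j) = j + 1 := by omega
        rw [this]
      set m : ℕ := n - N₀ + 1 with hmdef
      have hmn : m ≤ n := by omega
      have hsplit : ∑ i ∈ Finset.range n, |r i| * |H (n - i)|
          = ∑ i ∈ Finset.range m, |r i| * |H (n - i)|
            + ∑ i ∈ Finset.Ico m n, |r i| * |H (n - i)| := by
        rw [← Finset.sum_range_add_sum_Ico _ hmn]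
      have hpart1 : ∑ i ∈ Finset.range m, |r i| * |H (n - i)| ≤ (Lr + ε₁) * C * a n := by
        have : ∀ i ∈ Finset.range m, |r i| * |H (n - i)| ≤ |r i| * ((Lr + ε₁) * a n) := by
          intro i hi
          have hi' := Finset.mem_range.mp hi
          have hni : N₀ ≤ n - i := by omega
          have hHi := (hN₀ (n - i) hni).1
          have hmono : a (n - i) ≤ a n := ha.monotone (by omega)
          have : |H (n - i)| ≤ (Lr + ε₁) * a n :=
            hHi.trans (by nlinarith)
          exact mul_le_mul_of_nonneg_left this (abs_nonneg _)
        refine (Finset.sum_le_sum this).trans ?_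
        rw [← Finset.sum_mul]
        calc (∑ i ∈ Finset.range m, |r i|) * ((Lr + ε₁) * a n)
            ≤ C * ((Lr + ε₁) * a n) :=
              mul_le_mul_of_nonneg_right (hPC m) (mul_nonneg (by linarith) han.le)
          _ = (Lr + ε₁) * C * a n := by ring
      have hpart2 : ∑ i ∈ Finset.Ico m n, |r i| * |H (n - i)| ≤ M * (C - P m) := by
        have hb : ∀ i ∈ Finset.Ico m n, |r i| * |H (n - i)| ≤ |r i| * M := by
          intro i hi
          obtain ⟨hi1, hi2⟩ := Finset.mem_Ico.mp hi
          have : n - i < N₀ := by omega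
          exact mul_le_mul_of_nonneg_left (hMb _ this) (abs_nonneg _)
        refine (Finset.sum_le_sum hb).trans ?_
        rw [← Finset.sum_mul, Finset.sum_Ico_eq_sub _ hmn]
        have h3 : (∑ i ∈ Finset.range n, |r i|) - ∑ i ∈ Finset.range m, |r i| ≤ C - P m := by
          have := hPC n
          simp only [hPdef]
          linarith
        nlinarith
      calc |x n| ≤ |r n| * |ξ| + ((∑ i ∈ Finset.range m, |r i| * |H (n - i)|)
            + ∑ i ∈ Finset.Ico m n, |r i| * |H (n - i)|) := by
            rw [← hsplit, ← h2]; exact h1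
        _ ≤ |r n| * |ξ| + ((Lr + ε₁) * C * a n + M * (C - P m)) := by
            gcongr
        _ = (Lr + ε₁) * C * a n + g n := by simp only [hgdef]; ring
    -- g n / a n → 0
    have hr0 : Tendsto (fun n => |r n|) atTop (nhds 0) := hrs.tendsto_atTop_zero
    have hPt : Tendsto (fun n : ℕ => P (n - N₀ + 1)) atTop (nhds C) := by
      have h1 : Tendsto P atTop (nhds C) := hrs.hasSum.tendsto_sum_nat
      have h2 : Tendsto (fun n : ℕ => n - N₀ + 1) atTop atTop :=
        tendsto_atTop_atTop.mpr fun b => ⟨b + N₀, fun n hn => by omega⟩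
      exact h1.comp h2
    have hg0 : Tendsto g atTop (nhds 0) := by
      have : Tendsto g atTop (nhds (0 * |ξ| + M * (C - C))) :=
        ((hr0.mul_const _).add (((tendsto_const_nhds.sub hPt).const_mul M)))
      simpa using this
    have hga : Tendsto (fun n => g n / a n) atTop (nhds 0) := hg0.div_atTop ha'
    have hev2 : ∀ᶠ n in atTop, g n / a n < ε / 2 :=
      hga.eventually_lt_const (by positivity)
    -- conclude
    apply limsup_le_of_le
    · isBoundedDefault
    · filter_upwards [hev2, haev, eventually_ge_atTop N₀] with n h2 h3 h4
      have hb := hbound n h4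
      have : |x n| / a n ≤ (Lr + ε₁) * C + g n / a n := by
        rw [div_le_iff₀ h3]
        have : ((Lr + ε₁) * C + g n / a n) * a n = (Lr + ε₁) * C * a n + (g n / a n) * a n := by
          ring
        rw [this, div_mul_cancel₀ _ h3.ne']
        exact hb
      have hfin : |x n| / a n ≤ C * Lr + ε := by
        have hC1 : ε₁ * C ≤ ε / 2 := by
          rw [hε₁def]
          rw [div_mul_eq_mul_div, div_le_div_iff₀ (by positivity) (by norm_num)]
          nlinarith
        nlinarith
      exact_mod_cast hfin
  -- pass to the limit ε → 0
  have hseq : Tendsto (fun n : ℕ => ((C * Lr + 1 / (n + 1) : ℝ) : EReal)) atTop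
      (nhds ((C * Lr : ℝ) : EReal)) := by
    rw [show ((C * Lr : ℝ) : EReal) = ((C * Lr + 0 : ℝ) : EReal) by norm_num]
    exact EReal.tendsto_coe.mpr (tendsto_const_nhds.add tendsto_one_div_add_atTop_nhds_zero_nat)
  exact ge_of_tendsto' hseq fun n => key _ (by positivity)
end

section
/- Suppose k and the resolvent r are summable, x is the solution of the Volterra summation equation, and φ : [0,∞) → [0,∞) is an increasing convex function. Then limsup_{n→∞} (1/n) Σ_{j=0}^n φ(|x(j)|) ≤ limsup_{n→∞} (1/n) Σ_{j=0}^n φ(|r|₁ |H(j)|), and limsup_{n→∞} (1/n) Σ_{j=0}^n φ(|H(j)|) ≤ limsup_{n→∞} (1/n) Σ_{j=0}^n φ((1 + |k|₁) |x(j)|), where |r|₁ = Σ_{j=0}^∞ |r(j)| and |k|₁ = Σ_{j=0}^∞ |k(j)|. -/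
open Filter Finset

/-!
In generating functions the resolvent equation reads `(1 - X k̂) r̂ = 1` and the Volterra
equation `(1 - X k̂) x̂ = ĥ`, where `h` is `H` with `h 0 = x 0`; hence `x̂ = r̂ ĥ`. So `|x|` is
bounded by the convolution of `|r|` with `|h|`, and `|h|` by the convolution of `|κ|` with `|x|`,
where `κ = 1, -k 0, -k 1, …` are the coefficients of `1 - X k̂`, of ℓ¹ norm `1 + |k|₁`.
For a convolution with `|a|`, `A = |a|₁`, Jensen's inequality with the sub-probability weights
`|a i| / A` (the missing mass put at `0`) bounds `φ |u n|`; summing over `n ≤ N` and exchanging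
the sums leaves a constant plus a Cesàro-null error, which vanish in the limsup of the averages.
-/

open Topology

theorem ConvexOn.map_le_sum_add_of_monotoneOn {ι : Type*} {φ : ℝ → ℝ}
    (hconv : ConvexOn ℝ (Set.Ici 0) φ) (hmono : MonotoneOn φ (Set.Ici 0)) {s : Finset ι}
    {w p : ι → ℝ} (hw : ∀ i ∈ s, 0 ≤ w i) (hw1 : ∑ i ∈ s, w i ≤ 1) (hp : ∀ i ∈ s, 0 ≤ p i)
    {t : ℝ} (ht0 : 0 ≤ t) (ht : t ≤ ∑ i ∈ s, w i * p i) :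
    φ t ≤ ∑ i ∈ s, w i * φ (p i) + (1 - ∑ i ∈ s, w i) * φ 0 := by
  have hjensen := hconv.map_sum_le (t := insertNone s)
    (w := fun o => o.elim (1 - ∑ i ∈ s, w i) w) (p := fun o => o.elim 0 p)
    (by rintro (_ | i) hi <;> simp_all) (by simp [sum_insertNone])
    (by rintro (_ | i) hi <;> simp_all)
  simp only [sum_insertNone, Option.elim, smul_eq_mul, mul_zero, zero_add] at hjensen
  calc φ t ≤ φ (∑ i ∈ s, w i * p i) :=
        hmono ht0 (sum_nonneg fun i hi => mul_nonneg (hw i hi) (hp i hi)) ht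
    _ ≤ _ := by linarith

theorem sum_range_sum_antidiagonal_le_mul {R : Type*} [CommSemiring R] [PartialOrder R]
    [IsOrderedRing R] {f g : ℕ → R} (hf : ∀ i, 0 ≤ f i) (hg : ∀ j, 0 ≤ g j) (N : ℕ) :
    ∑ n ∈ range N, ∑ p ∈ antidiagonal n, f p.1 * g p.2 ≤
      (∑ i ∈ range N, f i) * ∑ j ∈ range N, g j := by
  have hdisj : (range N : Set ℕ).PairwiseDisjoint antidiagonal := by
    intro m _ n _ hmn
    refine disjoint_left.2 fun p hm hn => hmn ?_
    rw [HasAntidiagonal.mem_antidiagonal] at hm hn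
    omega
  rw [← sum_biUnion hdisj, sum_mul_sum, ← sum_product']
  refine sum_le_sum_of_subset_of_nonneg (fun p hp => ?_) fun p _ _ => mul_nonneg (hf _) (hg _)
  simp only [mem_biUnion, mem_range, HasAntidiagonal.mem_antidiagonal, mem_product] at hp ⊢
  omega

theorem EReal.limsup_coe_le_of_le_add {α : Type*} {l : Filter α} [l.NeBot] {u v d : α → ℝ}
    (hd : Tendsto d l (𝓝 0)) (h : ∀ a, u a ≤ v a + d a) :
    limsup (fun a => (u a : EReal)) l ≤ limsup (fun a => (v a : EReal)) l := by
  have hd' : limsup (fun a => (d a : EReal)) l = 0 :=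
    ((continuous_coe_real_ereal.tendsto 0).comp hd).limsup_eq
  calc limsup (fun a => (u a : EReal)) l
      ≤ limsup ((fun a => (v a : EReal)) + fun a => (d a : EReal)) l :=
        limsup_le_limsup (Eventually.of_forall fun a => EReal.coe_le_coe_iff.2 (h a))
    _ ≤ limsup (fun a => (v a : EReal)) l + limsup (fun a => (d a : EReal)) l :=
        EReal.limsup_add_le (.inr (by simp [hd'])) (.inr (by simp [hd']))
    _ = _ := by rw [hd', add_zero]

theorem tendsto_one_div_mul_add_sum_range_succ {c : ℕ → ℝ} (hc : Tendsto c atTop (𝓝 0))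
    (C : ℝ) :
    Tendsto (fun n : ℕ => 1 / (n : ℝ) * (C + ∑ m ∈ range (n + 1), c m)) atTop (𝓝 0) := by
  have hC : Tendsto (fun n : ℕ => 1 / (n : ℝ) * C) atTop (𝓝 0) := by
    simpa using tendsto_one_div_atTop_nhds_zero_nat.mul_const C
  have hlast : Tendsto (fun n : ℕ => 1 / (n : ℝ) * c n) atTop (𝓝 0) := by
    simpa using tendsto_one_div_atTop_nhds_zero_nat.mul hc
  have := (hC.add hc.cesaro).add hlast
  simp only [add_zero] at this
  refine this.congr fun n => ?_
  rw [sum_range_succ, one_div]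
  ring


section ConvolutionBound

variable {a u v : ℕ → ℝ} {A : ℝ} {φ : ℝ → ℝ}

theorem map_abs_le_of_abs_le_sum_antidiagonal (hconv : ConvexOn ℝ (Set.Ici 0) φ)
    (hmono : MonotoneOn φ (Set.Ici 0)) (hA : 0 < A) {n : ℕ}
    (hpart : ∑ i ∈ range (n + 1), |a i| ≤ A)
    (huv : |u n| ≤ ∑ p ∈ antidiagonal n, |a p.1| * |v p.2|) :
    φ |u n| ≤ ∑ p ∈ antidiagonal n, |a p.1| / A * φ (A * |v p.2|) +
      (1 - (∑ i ∈ range (n + 1), |a i|) / A) * φ 0 := by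
  have hsum : ∑ p ∈ antidiagonal n, |a p.1| / A = (∑ i ∈ range (n + 1), |a i|) / A := by
    rw [← sum_div, Nat.sum_antidiagonal_eq_sum_range_succ_mk]
  rw [← hsum]
  refine hconv.map_le_sum_add_of_monotoneOn hmono (fun _ _ => by positivity) ?_
    (fun _ _ => by positivity) (abs_nonneg _) ?_
  · rw [hsum]
    exact div_le_one_of_le₀ hpart hA.le
  · refine huv.trans_eq (sum_congr rfl fun p _ => ?_)
    field_simp

theorem sum_range_map_abs_le_of_abs_le_sum_antidiagonal (hconv : ConvexOn ℝ (Set.Ici 0) φ)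
    (hmono : MonotoneOn φ (Set.Ici 0)) (hφ0 : ∀ t : ℝ, 0 ≤ t → 0 ≤ φ t) (hA : 0 < A)
    (hpart : ∀ n, ∑ i ∈ range n, |a i| ≤ A)
    (huv : ∀ n, |u n| ≤ ∑ p ∈ antidiagonal n, |a p.1| * |v p.2|) (N : ℕ) :
    ∑ n ∈ range N, φ |u n| ≤ ∑ n ∈ range N, φ (A * |v n|) +
      ∑ n ∈ range N, (1 - (∑ i ∈ range (n + 1), |a i|) / A) * φ 0 := by
  have hweights : ∑ i ∈ range N, |a i| / A ≤ 1 := by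
    rw [← sum_div]
    exact div_le_one_of_le₀ (hpart N) hA.le
  calc ∑ n ∈ range N, φ |u n|
      ≤ ∑ n ∈ range N, (∑ p ∈ antidiagonal n, |a p.1| / A * φ (A * |v p.2|) +
          (1 - (∑ i ∈ range (n + 1), |a i|) / A) * φ 0) :=
        sum_le_sum fun n _ =>
          map_abs_le_of_abs_le_sum_antidiagonal hconv hmono hA (hpart _) (huv n)
    _ ≤ (∑ i ∈ range N, |a i| / A) * ∑ j ∈ range N, φ (A * |v j|) +
          ∑ n ∈ range N, (1 - (∑ i ∈ range (n + 1), |a i|) / A) * φ 0 := by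
        rw [sum_add_distrib]
        gcongr
        exact sum_range_sum_antidiagonal_le_mul (f := fun i => |a i| / A)
          (g := fun j => φ (A * |v j|)) (fun _ => by positivity)
          (fun _ => hφ0 _ (by positivity)) N
    _ ≤ _ := by
        gcongr
        exact mul_le_of_le_one_left (sum_nonneg fun _ _ => hφ0 _ (by positivity)) hweights

end ConvolutionBound

theorem limsup_avg_le_of_sum_range_le {f g c : ℕ → ℝ} (hc : Tendsto c atTop (𝓝 0)) (C : ℝ)
    (h : ∀ N, ∑ n ∈ range (N + 1), f n ≤
      ∑ n ∈ range (N + 1), g n + (C + ∑ n ∈ range (N + 1), c n)) :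
    limsup (fun n : ℕ => ((1 / (n : ℝ) * ∑ j ∈ range (n + 1), f j : ℝ) : EReal)) atTop ≤
      limsup (fun n : ℕ => ((1 / (n : ℝ) * ∑ j ∈ range (n + 1), g j : ℝ) : EReal)) atTop := by
  refine EReal.limsup_coe_le_of_le_add (tendsto_one_div_mul_add_sum_range_succ hc C)
    fun n => ?_
  rw [← mul_add]
  exact mul_le_mul_of_nonneg_left (h n) (by positivity)

theorem tendsto_one_sub_sum_range_succ_div_mul {a : ℕ → ℝ} {A : ℝ} (ha : HasSum a A)
    (hA : A ≠ 0) (b : ℝ) :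
    Tendsto (fun n : ℕ => (1 - (∑ i ∈ range (n + 1), a i) / A) * b) atTop (𝓝 0) := by
  have hlim := ((ha.tendsto_sum_nat.comp (tendsto_add_atTop_nat 1)).div_const A).const_sub 1
  rw [div_self hA, sub_self] at hlim
  simpa using hlim.mul_const b

theorem sum_range_succ_comp_update_zero {α M : Type*} [AddCommGroup M] (F : α → M)
    (H : ℕ → α) (b : α) (N : ℕ) :
    ∑ n ∈ range (N + 1), F (Function.update H 0 b n) =
      ∑ n ∈ range (N + 1), F (H n) + (F b - F (H 0)) := by
  simp only [sum_range_succ', Function.update_self, ne_eq, Nat.succ_ne_zero, not_false_eq_true,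
    Function.update_of_ne]
  abel

namespace PowerSeries

theorem abs_coeff_mul_le (f g : ℝ⟦X⟧) (n : ℕ) :
    |coeff n (f * g)| ≤ ∑ p ∈ antidiagonal n, |coeff p.1 f| * |coeff p.2 g| := by
  rw [coeff_mul]
  exact (abs_sum_le_sum_abs _ _).trans_eq (sum_congr rfl fun _ _ => abs_mul _ _)

theorem coeff_succ_one_sub_X_mul_mul_mk (k y : ℕ → ℝ) (n : ℕ) :
    coeff (n + 1) ((1 - X * mk k) * mk y) =
      y (n + 1) - ∑ j ∈ range (n + 1), k (n - j) * y j := by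
  rw [sub_mul, one_mul, map_sub, mul_assoc, coeff_succ_X_mul, coeff_mk, mul_comm, coeff_mul,
    Nat.sum_antidiagonal_eq_sum_range_succ fun i j => coeff i (mk y) * coeff j (mk k)]
  simp only [coeff_mk, mul_comm]

theorem _root_.IsResolvent.one_sub_X_mul_mul_eq_one {k r : ℕ → ℝ} (hres : IsResolvent k r) :
    (1 - X * mk k) * mk r = 1 := by
  ext (_ | n)
  · simp [hres.1]
  · simp [coeff_succ_one_sub_X_mul_mul_mk, hres.2 n, coeff_one]

theorem _root_.IsVolterraSol.one_sub_X_mul_mul_eq {k H x : ℕ → ℝ} (hx : IsVolterraSol k H x) :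
    (1 - X * mk k) * mk x = mk (Function.update H 0 (x 0)) := by
  ext (_ | n)
  · simp
  · simp [coeff_succ_one_sub_X_mul_mul_mk, hx n]

theorem _root_.IsVolterraSol.mk_eq_mul {k r H x : ℕ → ℝ} (hres : IsResolvent k r)
    (hx : IsVolterraSol k H x) : mk x = mk r * mk (Function.update H 0 (x 0)) := by
  calc mk x = ((1 - X * mk k) * mk r) * mk x := by
        rw [hres.one_sub_X_mul_mul_eq_one, one_mul]
    _ = mk r * ((1 - X * mk k) * mk x) := by ring
    _ = _ := by rw [hx.one_sub_X_mul_mul_eq]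

section Volterra

variable {k r H x : ℕ → ℝ} {φ : ℝ → ℝ}

theorem _root_.IsVolterraSol.limsup_avg_map_abs_sol_le (hres : IsResolvent k r)
    (hrs : Summable fun j => |r j|) (hx : IsVolterraSol k H x)
    (hφ0 : ∀ t : ℝ, 0 ≤ t → 0 ≤ φ t) (hmono : MonotoneOn φ (Set.Ici 0))
    (hconv : ConvexOn ℝ (Set.Ici 0) φ) :
    limsup (fun n : ℕ => ((1 / (n : ℝ) * ∑ j ∈ range (n + 1), φ |x j| : ℝ) : EReal)) atTop ≤
      limsup (fun n : ℕ => ((1 / (n : ℝ) *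
        ∑ j ∈ range (n + 1), φ ((∑' i : ℕ, |r i|) * |H j|) : ℝ) : EReal)) atTop := by
  set R := ∑' i : ℕ, |r i|
  have hR : 0 < R := one_pos.trans_le <| by
    simpa [hres.1] using hrs.le_tsum 0 fun i _ => abs_nonneg (r i)
  have hbound (n : ℕ) : |x n| ≤
      ∑ p ∈ antidiagonal n, |r p.1| * |Function.update H 0 (x 0) p.2| := by
    have h := abs_coeff_mul_le (mk r) (mk (Function.update H 0 (x 0))) n
    simpa only [← hx.mk_eq_mul hres, coeff_mk] using h
  refine limsup_avg_le_of_sum_range_le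
    (tendsto_one_sub_sum_range_succ_div_mul hrs.hasSum hR.ne' (φ 0))
    (φ (R * |x 0|) - φ (R * |H 0|)) fun N => ?_
  have hsum := sum_range_map_abs_le_of_abs_le_sum_antidiagonal hconv hmono hφ0 hR
    (fun n => sum_le_hasSum _ (fun i _ => abs_nonneg (r i)) hrs.hasSum) hbound (N + 1)
  rw [sum_range_succ_comp_update_zero (fun y => φ (R * |y|))] at hsum
  linarith

theorem _root_.IsVolterraSol.limsup_avg_map_abs_forcing_le (hk : Summable fun j => |k j|)
    (hx : IsVolterraSol k H x)
    (hφ0 : ∀ t : ℝ, 0 ≤ t → 0 ≤ φ t) (hmono : MonotoneOn φ (Set.Ici 0))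
    (hconv : ConvexOn ℝ (Set.Ici 0) φ) :
    limsup (fun n : ℕ => ((1 / (n : ℝ) * ∑ j ∈ range (n + 1), φ |H j| : ℝ) : EReal)) atTop ≤
      limsup (fun n : ℕ => ((1 / (n : ℝ) *
        ∑ j ∈ range (n + 1), φ ((1 + ∑' i : ℕ, |k i|) * |x j|) : ℝ) : EReal)) atTop := by
  set K := ∑' i : ℕ, |k i|
  have hK : 0 < 1 + K := by positivity
  have hκ : HasSum (fun i => |coeff i (1 - X * mk k)|) (1 + K) := by
    have hshift : (fun i => |coeff (i + 1) (1 - X * mk k)|) = fun i => |k i| := by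
      ext i
      simp [coeff_succ_X_mul, coeff_one]
    have h : HasSum (fun i => |coeff i (1 - X * mk k)|)
        (|coeff 0 (1 - X * mk k)| + K) :=
      HasSum.zero_add (by rw [hshift]; exact hk.hasSum)
    simpa using h
  have hbound (n : ℕ) : |Function.update H 0 (x 0) n| ≤
      ∑ p ∈ antidiagonal n, |coeff p.1 (1 - X * mk k)| * |x p.2| := by
    have h := abs_coeff_mul_le (1 - X * mk k) (mk x) n
    simpa only [hx.one_sub_X_mul_mul_eq, coeff_mk] using h
  refine limsup_avg_le_of_sum_range_le
    (tendsto_one_sub_sum_range_succ_div_mul hκ hK.ne' (φ 0))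
    (φ |H 0| - φ |x 0|) fun N => ?_
  have hsum := sum_range_map_abs_le_of_abs_le_sum_antidiagonal hconv hmono hφ0 hK
    (fun n => sum_le_hasSum _ (fun i _ => abs_nonneg _) hκ) hbound (N + 1)
  rw [sum_range_succ_comp_update_zero (fun y => φ |y|)] at hsum
  linarith

end Volterra

end PowerSeries

theorem stmt10_general (k r H x : ℕ → ℝ)
    (hk : Summable fun j => |k j|)
    (hres : IsResolvent k r) (hrs : Summable fun j => |r j|)
    (hx : IsVolterraSol k H x)
    (φ : ℝ → ℝ) (hφ0 : ∀ t : ℝ, 0 ≤ t → 0 ≤ φ t)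
    (hφmono : MonotoneOn φ (Set.Ici 0))
    (hφconv : ConvexOn ℝ (Set.Ici 0) φ) :
    Filter.limsup
        (fun n : ℕ =>
          (((1 / (n : ℝ)) * ∑ j ∈ Finset.range (n + 1), φ |x j| : ℝ) : EReal))
        atTop ≤
      Filter.limsup
        (fun n : ℕ =>
          (((1 / (n : ℝ)) *
              ∑ j ∈ Finset.range (n + 1), φ ((∑' i : ℕ, |r i|) * |H j|) : ℝ) : EReal))
        atTop ∧
    Filter.limsup
        (fun n : ℕ =>
          (((1 / (n : ℝ)) * ∑ j ∈ Finset.range (n + 1), φ |H j| : ℝ) : EReal))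
        atTop ≤
      Filter.limsup
        (fun n : ℕ =>
          (((1 / (n : ℝ)) *
              ∑ j ∈ Finset.range (n + 1), φ ((1 + ∑' i : ℕ, |k i|) * |x j|) : ℝ) : EReal))
        atTop :=
  ⟨hx.limsup_avg_map_abs_sol_le hres hrs hφ0 hφmono hφconv,
    hx.limsup_avg_map_abs_forcing_le hk hφ0 hφmono hφconv⟩

theorem stmt10 (k r H x : ℕ → ℝ) (ξ : ℝ)
    (hk : Summable fun j => |k j|)
    (hres : IsResolvent k r) (hrs : Summable fun j => |r j|)
    (hx0 : x 0 = ξ) (hx : IsVolterraSol k H x)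
    (φ : ℝ → ℝ) (hφ0 : ∀ t : ℝ, 0 ≤ t → 0 ≤ φ t)
    (hφmono : MonotoneOn φ (Set.Ici 0))
    (hφconv : ConvexOn ℝ (Set.Ici 0) φ) :
    Filter.limsup
        (fun n : ℕ =>
          (((1 / (n : ℝ)) * ∑ j ∈ Finset.range (n + 1), φ |x j| : ℝ) : EReal))
        atTop ≤
      Filter.limsup
        (fun n : ℕ =>
          (((1 / (n : ℝ)) *
              ∑ j ∈ Finset.range (n + 1), φ ((∑' i : ℕ, |r i|) * |H j|) : ℝ) : EReal))
        atTop ∧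
    Filter.limsup
        (fun n : ℕ =>
          (((1 / (n : ℝ)) * ∑ j ∈ Finset.range (n + 1), φ |H j| : ℝ) : EReal))
        atTop ≤
      Filter.limsup
        (fun n : ℕ =>
          (((1 / (n : ℝ)) *
              ∑ j ∈ Finset.range (n + 1), φ ((1 + ∑' i : ℕ, |k i|) * |x j|) : ℝ) : EReal))
        atTop :=
  stmt10_general k r H x hk hres hrs hx φ hφ0 hφmono hφconv
end

section
/- Suppose k and the resolvent r are summable, x is the solution of the Volterra summation equation, and φ : [0,∞) → [0,∞) is an increasing, convex, and O-regularly varying function. Then limsup_{n→∞} (1/n) Σ_{j=0}^n φ(|x(j)|) < ∞ if and only if limsup_{n→∞} (1/n) Σ_{j=0}^n φ(|H(j)|) < ∞. -/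
open Filter Finset

/-- `φ` is O-regularly varying at infinity:
`0 < liminf_{t→∞} φ(λt)/φ(t) ≤ limsup_{t→∞} φ(λt)/φ(t) < ∞` for each `λ > 1`. -/
def ORegVarying (φ : ℝ → ℝ) : Prop :=
  ∀ lam : ℝ, 1 < lam →
    (0 : EReal) < Filter.liminf (fun t : ℝ => ((φ (lam * t) / φ t : ℝ) : EReal)) atTop ∧
    Filter.limsup (fun t : ℝ => ((φ (lam * t) / φ t : ℝ) : EReal)) atTop < ⊤

/-!
Write `h` for `H` with `h 0 = x 0`. In formal power series the equation and the resolvent identity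
read `(1 - X k) x = h` and `(1 - X k) r = 1`, so `x = r h` and `h = (1 - X k) x`: each of `x`, `h`
is the convolution of the other with an absolutely summable kernel, and changing one term does not
affect boundedness of the means. So it suffices that convolution with a summable kernel `a`
preserves bounded means of `φ (|·|)`. After dividing `a` by `T > ∑ |a|`, Jensen's inequality for
sub-probability weights gives `φ |(a ⋆ z) n| ≤ ∑ j, a (n - j) φ (T |z j|) / T + φ 0`; summing over
`n` loses only the factor `∑ a / T ≤ 1`, and `φ (T t) ≤ C φ t + D` by O-regular variation.
-/

open PowerSeries Function

def MeanBounded (u : ℕ → ℝ) : Prop :=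
  ∃ M : ℝ, ∀ᶠ n in atTop, ∑ j ∈ range (n + 1), u j ≤ M * n

theorem EReal.limsup_coe_lt_top_iff {α : Type*} {l : Filter α} (u : α → ℝ) :
    limsup (fun a => (u a : EReal)) l < ⊤ ↔ ∃ M : ℝ, ∀ᶠ a in l, u a ≤ M := by
  constructor
  · intro h
    obtain ⟨M, hM, -⟩ := EReal.exists_between_coe_real h
    exact ⟨M, (eventually_lt_of_limsup_lt hM).mono fun a ha => (EReal.coe_lt_coe_iff.1 ha).le⟩
  · rintro ⟨M, hM⟩
    refine (limsup_le_of_le (by isBoundedDefault) ?_).trans_lt (EReal.coe_lt_top M)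
    exact hM.mono fun a ha => EReal.coe_le_coe_iff.2 ha

theorem limsup_mean_lt_top_iff_meanBounded (u : ℕ → ℝ) :
    limsup (fun n : ℕ => (((1 / (n : ℝ)) * ∑ j ∈ range (n + 1), u j : ℝ) : EReal)) atTop < ⊤ ↔
      MeanBounded u := by
  rw [EReal.limsup_coe_lt_top_iff]
  refine exists_congr fun M => eventually_congr ((eventually_ge_atTop 1).mono fun n hn => ?_)
  have hn : (0 : ℝ) < n := by exact_mod_cast hn
  rw [one_div_mul_eq_div, div_le_iff₀ hn]

namespace MeanBounded

variable {u v : ℕ → ℝ}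

theorem of_sum_le (hv : MeanBounded v) {C D : ℝ} (hC : 0 ≤ C) (hD : 0 ≤ D)
    (h : ∀ᶠ n in atTop, ∑ j ∈ range (n + 1), u j ≤ C * ∑ j ∈ range (n + 1), v j + (n + 1) * D) :
    MeanBounded u := by
  obtain ⟨M, hM⟩ := hv
  refine ⟨C * M + 2 * D, ?_⟩
  filter_upwards [hM, h, eventually_ge_atTop 1] with n hMn hn hn1
  have hn1 : (1 : ℝ) ≤ n := by exact_mod_cast hn1
  calc ∑ j ∈ range (n + 1), u j ≤ C * ∑ j ∈ range (n + 1), v j + (n + 1) * D := hn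
    _ ≤ C * (M * n) + (n + 1) * D := by gcongr
    _ ≤ (C * M + 2 * D) * n := by nlinarith

theorem of_le_mul_add (hv : MeanBounded v) {C D : ℝ} (hC : 0 ≤ C) (hD : 0 ≤ D)
    (h : ∀ j, u j ≤ C * v j + D) : MeanBounded u :=
  hv.of_sum_le hC hD <| Eventually.of_forall fun n =>
    calc ∑ j ∈ range (n + 1), u j ≤ ∑ j ∈ range (n + 1), (C * v j + D) := sum_le_sum fun j _ => h j
      _ = C * ∑ j ∈ range (n + 1), v j + (n + 1) * D := by
        rw [sum_add_distrib, ← mul_sum, sum_const, card_range, nsmul_eq_mul]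
        push_cast
        ring

theorem update (hu : MeanBounded u) (i : ℕ) (c : ℝ) : MeanBounded (update u i c) := by
  refine hu.of_sum_le zero_le_one (abs_nonneg (c - u i)) ?_
  filter_upwards [eventually_ge_atTop i] with n hn
  have hi : i ∈ range (n + 1) := mem_range.2 (by omega)
  rw [sum_update_of_mem hi, sum_eq_add_sum_sdiff_singleton_of_mem hi u]
  have hn : (1 : ℝ) ≤ n + 1 := by linarith [n.cast_nonneg (α := ℝ)]
  have : c - u i ≤ (n + 1) * |c - u i| :=
    (le_abs_self _).trans (le_mul_of_one_le_left (abs_nonneg _) hn)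
  linarith

end MeanBounded

theorem ORegVarying.eventually_le_mul {φ : ℝ → ℝ} (hφ : ORegVarying φ)
    (hφ0 : ∀ t, 0 ≤ t → 0 ≤ φ t) {lam : ℝ} (hlam : 1 < lam) :
    ∃ C : ℝ, ∀ᶠ t in atTop, φ (lam * t) ≤ C * φ t := by
  obtain ⟨hinf, hsup⟩ := hφ lam hlam
  obtain ⟨C, hC⟩ := (EReal.limsup_coe_lt_top_iff _).1 hsup
  refine ⟨C, ?_⟩
  filter_upwards [eventually_lt_of_lt_liminf hinf, hC, eventually_ge_atTop 0] with t hpos hle ht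
  have hφt : 0 < φ t := by
    rcases div_pos_iff.1 (EReal.coe_pos.1 hpos) with h | h
    · exact h.2
    · exact absurd h.1 (not_lt.2 (hφ0 _ (by positivity)))
  exact (div_le_iff₀ hφt).1 hle

theorem ORegVarying.exists_le_mul_add {φ : ℝ → ℝ} (hφ : ORegVarying φ)
    (hφ0 : ∀ t, 0 ≤ t → 0 ≤ φ t) (hφmono : MonotoneOn φ (Set.Ici 0)) {T : ℝ} (hT : 0 ≤ T) :
    ∃ C D : ℝ, 0 ≤ C ∧ 0 ≤ D ∧ ∀ t, 0 ≤ t → φ (T * t) ≤ C * φ t + D := by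
  set lam := max T 2
  have hlam : 1 < lam := one_lt_two.trans_le (le_max_right _ _)
  obtain ⟨C, hC⟩ := hφ.eventually_le_mul hφ0 hlam
  obtain ⟨t₀, ht₀⟩ := eventually_atTop.1 hC
  refine ⟨max C 0, φ (lam * max t₀ 0), le_max_right _ _, hφ0 _ (by positivity), fun t ht => ?_⟩
  have hTt : φ (T * t) ≤ φ (lam * t) :=
    hφmono (by simp only [Set.mem_Ici]; positivity) (by simp only [Set.mem_Ici]; positivity)
      (by gcongr; exact le_max_left _ _)
  rcases le_or_gt t₀ t with h | h
  · have hCt : C * φ t ≤ max C 0 * φ t := by gcongr; exacts [hφ0 t ht, le_max_left _ _]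
    linarith [ht₀ t h, hφ0 (lam * max t₀ 0) (by positivity)]
  · have : φ (lam * t) ≤ φ (lam * max t₀ 0) :=
      hφmono (by simp only [Set.mem_Ici]; positivity) (by simp only [Set.mem_Ici]; positivity)
        (by gcongr; exact h.le.trans (le_max_left _ _))
    linarith [mul_nonneg (le_max_right C 0) (hφ0 t ht)]

theorem sum_range_sum_range_mul_le_tsum_mul {a g : ℕ → ℝ} (ha0 : ∀ n, 0 ≤ a n) (ha : Summable a)
    (hg : ∀ n, 0 ≤ g n) (N : ℕ) :
    ∑ n ∈ range (N + 1), ∑ j ∈ range (n + 1), a (n - j) * g j ≤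
      (∑' n, a n) * ∑ j ∈ range (N + 1), g j := by
  simp_rw [range_eq_Ico]
  rw [← sum_Ico_Ico_comm, mul_sum]
  refine sum_le_sum fun j _ => ?_
  rw [← sum_mul, sum_Ico_eq_sum_range]
  simp only [add_tsub_cancel_left]
  gcongr
  · exact hg j
  · exact ha.sum_le_tsum _ fun n _ => ha0 n

theorem ConvexOn.map_sum_le_add_map_zero {S : Set ℝ} {φ : ℝ → ℝ} (hφ : ConvexOn ℝ S φ)
    (hS : 0 ∈ S) (hφ0 : 0 ≤ φ 0) {ι : Type*} {s : Finset ι} {w p : ι → ℝ}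
    (hw0 : ∀ i ∈ s, 0 ≤ w i) (hw1 : ∑ i ∈ s, w i ≤ 1) (hp : ∀ i ∈ s, p i ∈ S) :
    φ (∑ i ∈ s, w i * p i) ≤ ∑ i ∈ s, w i * φ (p i) + φ 0 := by
  have := hφ.map_add_sum_le hw0 (v := 1 - ∑ i ∈ s, w i) (by ring) hp (by linarith) hS
  simp only [smul_eq_mul, mul_zero, zero_add] at this
  nlinarith [sum_nonneg hw0]

theorem MeanBounded.of_abs_le_conv_of_tsum_le_one {φ : ℝ → ℝ} (hφ0 : ∀ t, 0 ≤ t → 0 ≤ φ t)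
    (hφmono : MonotoneOn φ (Set.Ici 0)) (hφconv : ConvexOn ℝ (Set.Ici 0) φ)
    {a y z : ℕ → ℝ} (ha0 : ∀ n, 0 ≤ a n) (ha : Summable a) (ha1 : ∑' n, a n ≤ 1)
    (hy : ∀ n, |y n| ≤ ∑ j ∈ range (n + 1), a (n - j) * |z j|)
    (hz : MeanBounded fun j => φ |z j|) : MeanBounded fun n => φ |y n| := by
  have hφ00 : 0 ≤ φ 0 := hφ0 0 le_rfl
  have hpoint : ∀ n, φ |y n| ≤ ∑ j ∈ range (n + 1), a (n - j) * φ |z j| + φ 0 := by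
    intro n
    have hmass : ∑ j ∈ range (n + 1), a (n - j) ≤ 1 := by
      have hreflect := sum_range_reflect a (n + 1)
      simp only [add_tsub_cancel_right] at hreflect
      rw [hreflect]
      exact (ha.sum_le_tsum _ fun i _ => ha0 i).trans ha1
    have hmem : ∀ j ∈ range (n + 1), |z j| ∈ Set.Ici (0 : ℝ) := fun j _ => abs_nonneg (z j)
    refine (hφmono (Set.mem_Ici.2 (abs_nonneg _)) ?_ (hy n)).trans
      (hφconv.map_sum_le_add_map_zero (Set.mem_Ici.2 le_rfl) hφ00 (fun j _ => ha0 _) hmass hmem)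
    exact Set.mem_Ici.2 ((abs_nonneg _).trans (hy n))
  refine hz.of_sum_le zero_le_one hφ00 (Eventually.of_forall fun N => ?_)
  have hzN : 0 ≤ ∑ j ∈ range (N + 1), φ |z j| := sum_nonneg fun j _ => hφ0 _ (abs_nonneg _)
  calc ∑ n ∈ range (N + 1), φ |y n|
      ≤ ∑ n ∈ range (N + 1), (∑ j ∈ range (n + 1), a (n - j) * φ |z j| + φ 0) :=
        sum_le_sum fun n _ => hpoint n
    _ = ∑ n ∈ range (N + 1), ∑ j ∈ range (n + 1), a (n - j) * φ |z j| + (N + 1) * φ 0 := by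
        rw [sum_add_distrib, sum_const, card_range, nsmul_eq_mul]
        push_cast
        ring
    _ ≤ (∑' n, a n) * ∑ j ∈ range (N + 1), φ |z j| + (N + 1) * φ 0 := by
        gcongr
        exact sum_range_sum_range_mul_le_tsum_mul ha0 ha (fun j => hφ0 _ (abs_nonneg _)) N
    _ ≤ 1 * ∑ j ∈ range (N + 1), φ |z j| + (N + 1) * φ 0 := by gcongr

theorem MeanBounded.of_abs_le_conv {φ : ℝ → ℝ} (hφ0 : ∀ t, 0 ≤ t → 0 ≤ φ t)
    (hφmono : MonotoneOn φ (Set.Ici 0)) (hφconv : ConvexOn ℝ (Set.Ici 0) φ)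
    (hφORV : ORegVarying φ) {a y z : ℕ → ℝ} (ha : Summable fun n => |a n|)
    (hy : ∀ n, |y n| ≤ ∑ j ∈ range (n + 1), |a (n - j)| * |z j|)
    (hz : MeanBounded fun j => φ |z j|) : MeanBounded fun n => φ |y n| := by
  set T := ∑' n, |a n| + 1
  have hS : 0 ≤ ∑' n, |a n| := tsum_nonneg fun n => abs_nonneg (a n)
  have hT : 0 < T := by linarith
  obtain ⟨C, D, hC, hD, hCD⟩ := hφORV.exists_le_mul_add hφ0 hφmono hT.le
  have hTz : MeanBounded fun j => φ |T * z j| :=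
    hz.of_le_mul_add hC hD fun j => by rw [abs_mul, abs_of_pos hT]; exact hCD _ (abs_nonneg _)
  refine hTz.of_abs_le_conv_of_tsum_le_one hφ0 hφmono hφconv (a := fun n => |a n| / T)
    (fun n => by positivity) (ha.div_const T) ?_ fun n => ?_
  · rw [tsum_div_const, div_le_one hT]
    linarith
  · refine (hy n).trans_eq (sum_congr rfl fun j _ => ?_)
    rw [abs_mul, abs_of_pos hT]
    field_simp

theorem PowerSeries.abs_coeff_mul_le_s11 (f g : ℝ⟦X⟧) (n : ℕ) :
    |coeff n (f * g)| ≤ ∑ j ∈ range (n + 1), |coeff (n - j) f| * |coeff j g| := by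
  rw [mul_comm, coeff_mul,
    Nat.sum_antidiagonal_eq_sum_range_succ (fun i j => coeff i g * coeff j f)]
  refine (abs_sum_le_sum_abs _ _).trans_eq (sum_congr rfl fun j _ => ?_)
  rw [abs_mul, mul_comm]

theorem MeanBounded.of_mk_eq_mul {φ : ℝ → ℝ} (hφ0 : ∀ t, 0 ≤ t → 0 ≤ φ t)
    (hφmono : MonotoneOn φ (Set.Ici 0)) (hφconv : ConvexOn ℝ (Set.Ici 0) φ)
    (hφORV : ORegVarying φ) {y z : ℕ → ℝ} {f : ℝ⟦X⟧} (hf : Summable fun n => |coeff n f|)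
    (h : PowerSeries.mk y = f * PowerSeries.mk z) (hz : MeanBounded fun j => φ |z j|) :
    MeanBounded fun n => φ |y n| :=
  hz.of_abs_le_conv hφ0 hφmono hφconv hφORV hf fun n => by
    simpa only [← h, coeff_mk] using abs_coeff_mul_le_s11 f (PowerSeries.mk z) n

theorem PowerSeries.coeff_succ_X_mul_mk_mul_mk {R : Type*} [CommSemiring R] (k u : ℕ → R)
    (n : ℕ) :
    coeff (n + 1) (X * mk k * mk u) = ∑ j ∈ range (n + 1), k (n - j) * u j := by
  rw [mul_assoc, coeff_succ_X_mul, mul_comm, coeff_mul,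
    Nat.sum_antidiagonal_eq_sum_range_succ (fun i j => coeff i (mk u) * coeff j (mk k))]
  simp only [coeff_mk, mul_comm]

theorem IsResolvent.one_sub_X_mul_mk_mul_mk {k r : ℕ → ℝ} (hr : IsResolvent k r) :
    (1 - X * PowerSeries.mk k) * PowerSeries.mk r = 1 := by
  ext (_ | n)
  · simp [hr.1]
  · rw [sub_mul, one_mul, map_sub, coeff_mk, coeff_succ_X_mul_mk_mul_mk, ← hr.2 n]
    simp

theorem IsVolterraSol.one_sub_X_mul_mk_mul_mk {k H x : ℕ → ℝ} (hx : IsVolterraSol k H x) :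
    (1 - X * PowerSeries.mk k) * PowerSeries.mk x = PowerSeries.mk (update H 0 (x 0)) := by
  ext (_ | n)
  · simp
  · rw [sub_mul, one_mul, map_sub, coeff_mk, coeff_succ_X_mul_mk_mul_mk, hx n]
    simp

theorem summable_abs_coeff_one_sub_X_mul_mk {k : ℕ → ℝ} (hk : Summable fun n => |k n|) :
    Summable fun n => |coeff n (1 - X * PowerSeries.mk k : ℝ⟦X⟧)| := by
  refine (summable_nat_add_iff 1).1 ?_
  simpa using hk

theorem stmt11_general (k r H x : ℕ → ℝ)
    (hk : Summable fun j => |k j|)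
    (hres : IsResolvent k r) (hrs : Summable fun j => |r j|)
    (hx : IsVolterraSol k H x)
    (φ : ℝ → ℝ) (hφ0 : ∀ t : ℝ, 0 ≤ t → 0 ≤ φ t)
    (hφmono : MonotoneOn φ (Set.Ici 0))
    (hφconv : ConvexOn ℝ (Set.Ici 0) φ)
    (hφORV : ORegVarying φ) :
    (Filter.limsup
        (fun n : ℕ =>
          (((1 / (n : ℝ)) * ∑ j ∈ Finset.range (n + 1), φ |x j| : ℝ) : EReal))
        atTop < ⊤) ↔
    (Filter.limsup
        (fun n : ℕ =>
          (((1 / (n : ℝ)) * ∑ j ∈ Finset.range (n + 1), φ |H j| : ℝ) : EReal))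
        atTop < ⊤) := by
  set h := update H 0 (x 0)
  have hxh : (1 - X * PowerSeries.mk k) * PowerSeries.mk x = PowerSeries.mk h :=
    hx.one_sub_X_mul_mk_mul_mk
  have hxr : PowerSeries.mk x = PowerSeries.mk r * PowerSeries.mk h := by
    rw [← hxh, ← mul_assoc, mul_comm (PowerSeries.mk r), hres.one_sub_X_mul_mk_mul_mk, one_mul]
  have hφh : (fun j => φ |h j|) = update (fun j => φ |H j|) 0 (φ |x 0|) :=
    comp_update (fun t => φ |t|) H 0 (x 0)
  have hφH : (fun j => φ |H j|) = update (fun j => φ |h j|) 0 (φ |H 0|) := by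
    rw [hφh, update_idem, update_eq_self]
  rw [limsup_mean_lt_top_iff_meanBounded, limsup_mean_lt_top_iff_meanBounded]
  constructor
  · intro hxb
    rw [hφH]
    exact (hxb.of_mk_eq_mul hφ0 hφmono hφconv hφORV (summable_abs_coeff_one_sub_X_mul_mk hk)
      hxh.symm).update 0 _
  · intro hHb
    have hhb : MeanBounded fun j => φ |h j| := by
      rw [hφh]
      exact hHb.update 0 _
    exact hhb.of_mk_eq_mul hφ0 hφmono hφconv hφORV (by simpa only [coeff_mk] using hrs) hxr

theorem stmt11 (k r H x : ℕ → ℝ) (ξ : ℝ)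
    (hk : Summable fun j => |k j|)
    (hres : IsResolvent k r) (hrs : Summable fun j => |r j|)
    (hx0 : x 0 = ξ) (hx : IsVolterraSol k H x)
    (φ : ℝ → ℝ) (hφ0 : ∀ t : ℝ, 0 ≤ t → 0 ≤ φ t)
    (hφmono : MonotoneOn φ (Set.Ici 0))
    (hφconv : ConvexOn ℝ (Set.Ici 0) φ)
    (hφORV : ORegVarying φ) :
    (Filter.limsup
        (fun n : ℕ =>
          (((1 / (n : ℝ)) * ∑ j ∈ Finset.range (n + 1), φ |x j| : ℝ) : EReal))
        atTop < ⊤) ↔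
    (Filter.limsup
        (fun n : ℕ =>
          (((1 / (n : ℝ)) * ∑ j ∈ Finset.range (n + 1), φ |H j| : ℝ) : EReal))
        atTop < ⊤) :=
  stmt11_general k r H x hk hres hrs hx φ hφ0 hφmono hφconv hφORV
end

section
/- Suppose k : ℕ → ℝ is summable, the resolvent r is summable, and λ ∈ (0,1]. Then Σ_{j=0}^∞ r(j) λ^j converges and equals 1/(1 − Σ_{l=0}^∞ k(l) λ^{l+1}), where the denominator is nonzero. -/
open Filter Finset

theorem stmt12 (k r : ℕ → ℝ) (lam : ℝ) (hlam : lam ∈ Set.Ioc (0 : ℝ) 1)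
    (hk : Summable fun j => |k j|)
    (hres : IsResolvent k r) (hrs : Summable fun j => |r j|) :
    Summable (fun j : ℕ => r j * lam ^ j) ∧
    (1 - ∑' l : ℕ, k l * lam ^ (l + 1)) ≠ 0 ∧
    ∑' j : ℕ, r j * lam ^ j = 1 / (1 - ∑' l : ℕ, k l * lam ^ (l + 1)) := by
  obtain ⟨hl0, hl1⟩ := hlam
  have hpow : ∀ n : ℕ, |lam ^ n| ≤ 1 := fun n => by
    rw [abs_pow, abs_of_pos hl0]
    exact pow_le_one₀ hl0.le hl1
  have hgn : Summable fun j : ℕ => ‖r j * lam ^ j‖ := by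
    apply hrs.of_nonneg_of_le (fun n => norm_nonneg _)
    intro n
    simp only [norm_mul, Real.norm_eq_abs]
    calc |r n| * |lam ^ n| ≤ |r n| * 1 := by
          exact mul_le_mul_of_nonneg_left (hpow n) (abs_nonneg _)
      _ = |r n| := mul_one _
  have hfn : Summable fun l : ℕ => ‖k l * lam ^ (l + 1)‖ := by
    apply hk.of_nonneg_of_le (fun n => norm_nonneg _)
    intro n
    simp only [norm_mul, Real.norm_eq_abs]
    calc |k n| * |lam ^ (n + 1)| ≤ |k n| * 1 :=
          mul_le_mul_of_nonneg_left (hpow _) (abs_nonneg _)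
      _ = |k n| := mul_one _
  have hg : Summable fun j : ℕ => r j * lam ^ j := hgn.of_norm
  refine ⟨hg, ?_⟩
  -- Cauchy product
  have hcp := tsum_mul_tsum_eq_tsum_sum_range_of_summable_norm hfn hgn
  have hterm : ∀ n : ℕ,
      (∑ i ∈ range (n + 1), (k i * lam ^ (i + 1)) * (r (n - i) * lam ^ (n - i)))
        = r (n + 1) * lam ^ (n + 1) := by
    intro n
    rw [hres.2 n, Finset.sum_mul,
      ← Finset.sum_range_reflect (fun i => (k i * lam ^ (i + 1)) * (r (n - i) * lam ^ (n - i)))]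
    apply Finset.sum_congr rfl
    intro i hi
    rw [Finset.mem_range] at hi
    have hle : i ≤ n := Nat.le_of_lt_succ hi
    have h0 : n + 1 - 1 - i = n - i := by omega
    have h1 : n - (n - i) = i := Nat.sub_sub_self hle
    rw [h0, h1]
    have h2 : lam ^ (n - i + 1) * lam ^ i = lam ^ (n + 1) := by
      rw [← pow_add]; congr 1; omega
    rw [mul_mul_mul_comm, h2]
  have htail : ∑' n : ℕ, r (n + 1) * lam ^ (n + 1)
      = (∑' j : ℕ, r j * lam ^ j) - 1 := by
    have := Summable.tsum_eq_zero_add hg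
    rw [this]
    simp [hres.1]
  have key : (∑' l : ℕ, k l * lam ^ (l + 1)) * (∑' j : ℕ, r j * lam ^ j)
      = (∑' j : ℕ, r j * lam ^ j) - 1 := by
    rw [hcp]
    rw [tsum_congr hterm, htail]
  set R := ∑' j : ℕ, r j * lam ^ j
  set K := ∑' l : ℕ, k l * lam ^ (l + 1)
  have hone : (1 - K) * R = 1 := by linarith [key]
  have hne : (1 - K) ≠ 0 := by
    intro h
    rw [h, zero_mul] at hone
    exact one_ne_zero hone.symm
  exact ⟨hne, by field_simp [hne]; linarith [hone]⟩
end

section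
/- Suppose a : ℕ → ℝ is an increasing sequence with a(n) → ∞, k : ℕ → ℝ is summable, and H : ℕ → ℝ satisfies Λ_a|H| < ∞. Then limsup_{n→∞} |(1/a(n)) Σ_{j=1}^n k(n−j) H(j)| ≤ (Σ_{j=0}^∞ |k(j)|) · Λ_a|H|. -/
open Filter Finset

theorem stmt13 (k H : ℕ → ℝ)
    (a : ℕ → ℝ) (ha : StrictMono a) (ha' : Tendsto a atTop atTop)
    (hk : Summable fun j => |k j|)
    (hH : Lam a H < ⊤) :
    Filter.limsup
        (fun n : ℕ =>
          ((|(1 / a n) * ∑ j ∈ Finset.Icc 1 n, k (n - j) * H j| : ℝ) : EReal))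
        atTop ≤
      ((∑' j : ℕ, |k j| : ℝ) : EReal) * Lam a H := by
  set K : ℝ := ∑' j : ℕ, |k j| with hKdef
  have hK0 : 0 ≤ K := tsum_nonneg fun j => abs_nonneg _
  have hkK : ∀ m, |k m| ≤ K := fun m => Summable.le_tsum hk m (fun _ _ => abs_nonneg _)
  -- eventually a n > 0
  obtain ⟨N₁, hN₁⟩ : ∃ N, ∀ n ≥ N, 0 < a n := by
    have := (ha'.eventually_gt_atTop 0)
    rw [eventually_atTop] at this
    exact this
  -- Lam a H is nonnegative
  have h0L : (0 : EReal) ≤ Lam a H := by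
    have hev : (fun _ : ℕ => (0 : EReal)) ≤ᶠ[atTop]
        (fun n => ((|H n| / a n : ℝ) : EReal)) := by
      filter_upwards [eventually_atTop.2 ⟨N₁, hN₁⟩] with n hn
      exact_mod_cast EReal.coe_nonneg.2 (div_nonneg (abs_nonneg _) hn.le)
    calc (0 : EReal) = limsup (fun _ : ℕ => (0 : EReal)) atTop := (limsup_const _).symm
      _ ≤ _ := limsup_le_limsup hev
  set L : EReal := Lam a H with hLdef
  set c : ℝ := L.toReal with hcdef
  have hLc : L = (c : EReal) := (EReal.coe_toReal hH.ne (fun h => by simp [h] at h0L)).symm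
  have hc0 : 0 ≤ c := by
    rw [hLc] at h0L; exact_mod_cast h0L
  -- main estimate for each ε > 0
  have key : ∀ ε : ℝ, 0 < ε →
      Filter.limsup
        (fun n : ℕ =>
          ((|(1 / a n) * ∑ j ∈ Finset.Icc 1 n, k (n - j) * H j| : ℝ) : EReal))
        atTop ≤ ((K * (c + ε) : ℝ) : EReal) := by
    intro ε hε
    have hlt : L < ((c + ε : ℝ) : EReal) := by
      rw [hLc]; exact_mod_cast lt_add_of_pos_right c hε
    have hev := eventually_lt_of_limsup_lt hlt
    obtain ⟨N₂, hN₂⟩ := eventually_atTop.1 hev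
    set N₀ : ℕ := max (max N₁ N₂) 1 with hN₀def
    have hN₀1 : 1 ≤ N₀ := le_max_right _ _
    have hapos : ∀ n ≥ N₀, 0 < a n := fun n hn =>
      hN₁ n (le_trans (le_trans (le_max_left _ _) (le_max_left _ _)) hn)
    have hHb : ∀ n ≥ N₀, |H n| ≤ (c + ε) * a n := by
      intro n hn
      have h1 := hN₂ n (le_trans (le_trans (le_max_right _ _) (le_max_left _ _)) hn)
      have h2 : |H n| / a n < c + ε := by exact_mod_cast h1
      have := hapos n hn
      calc |H n| = (|H n| / a n) * a n := by field_simp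
        _ ≤ (c + ε) * a n := by nlinarith
    set C₀ : ℝ := ∑ j ∈ Finset.Icc 1 N₀, |H j| with hC₀def
    have hC₀0 : 0 ≤ C₀ := Finset.sum_nonneg fun _ _ => abs_nonneg _
    -- pointwise bound for n ≥ N₀
    have hpt : ∀ n ≥ N₀,
        |(1 / a n) * ∑ j ∈ Finset.Icc 1 n, k (n - j) * H j|
          ≤ K * C₀ / a n + K * (c + ε) := by
      intro n hn
      have han : 0 < a n := hapos n hn
      have hsplit : Finset.Icc 1 n = Finset.Icc 1 N₀ ∪ Finset.Ioc N₀ n := by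
        ext x
        simp only [Finset.mem_Icc, Finset.mem_union, Finset.mem_Ioc]
        omega
      have hdisj : Disjoint (Finset.Icc 1 N₀) (Finset.Ioc N₀ n) := by
        simp only [Finset.disjoint_left, Finset.mem_Icc, Finset.mem_Ioc]
        omega
      have hS : |∑ j ∈ Finset.Icc 1 n, k (n - j) * H j|
          ≤ K * C₀ + (c + ε) * K * a n := by
        calc |∑ j ∈ Finset.Icc 1 n, k (n - j) * H j|
            ≤ ∑ j ∈ Finset.Icc 1 n, |k (n - j) * H j| := Finset.abs_sum_le_sum_abs _ _
          _ = (∑ j ∈ Finset.Icc 1 N₀, |k (n - j) * H j|)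
              + ∑ j ∈ Finset.Ioc N₀ n, |k (n - j) * H j| := by
              rw [hsplit, Finset.sum_union hdisj]
          _ ≤ K * C₀ + (c + ε) * K * a n := by
              gcongr ?_ + ?_
              · calc ∑ j ∈ Finset.Icc 1 N₀, |k (n - j) * H j|
                    ≤ ∑ j ∈ Finset.Icc 1 N₀, K * |H j| := by
                      refine Finset.sum_le_sum fun j _ => ?_
                      rw [abs_mul]
                      exact mul_le_mul_of_nonneg_right (hkK _) (abs_nonneg _)
                  _ = K * C₀ := by rw [hC₀def, Finset.mul_sum]
              · calc ∑ j ∈ Finset.Ioc N₀ n, |k (n - j) * H j|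
                    ≤ ∑ j ∈ Finset.Ioc N₀ n, |k (n - j)| * ((c + ε) * a n) := by
                      refine Finset.sum_le_sum fun j hj => ?_
                      rw [Finset.mem_Ioc] at hj
                      rw [abs_mul]
                      refine mul_le_mul_of_nonneg_left ?_ (abs_nonneg _)
                      calc |H j| ≤ (c + ε) * a j := hHb j (by omega)
                        _ ≤ (c + ε) * a n := by
                            have : a j ≤ a n := ha.monotone hj.2
                            nlinarith [hε, hc0]
                  _ = (∑ j ∈ Finset.Ioc N₀ n, |k (n - j)|) * ((c + ε) * a n) := by
                      rw [Finset.sum_mul]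
                  _ ≤ K * ((c + ε) * a n) := by
                      refine mul_le_mul_of_nonneg_right ?_ (by positivity)
                      have hinj : ∀ x ∈ Finset.Ioc N₀ n, ∀ y ∈ Finset.Ioc N₀ n,
                          n - x = n - y → x = y := by
                        simp only [Finset.mem_Ioc]; omega
                      have himg : ∑ m ∈ (Finset.Ioc N₀ n).image (fun j => n - j), |k m|
                          = ∑ j ∈ Finset.Ioc N₀ n, |k (n - j)| :=
                        Finset.sum_image (f := fun m => |k m|) hinj
                      rw [← himg]
                      exact Summable.sum_le_tsum _ (fun _ _ => abs_nonneg _) hk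
                  _ = (c + ε) * K * a n := by ring
      rw [abs_mul, abs_of_pos (by positivity : (0:ℝ) < 1 / a n)]
      calc (1 / a n) * |∑ j ∈ Finset.Icc 1 n, k (n - j) * H j|
          ≤ (1 / a n) * (K * C₀ + (c + ε) * K * a n) :=
            mul_le_mul_of_nonneg_left hS (by positivity)
        _ = K * C₀ / a n + K * (c + ε) := by
            rw [mul_add, one_div, inv_mul_eq_div]
            congr 1
            rw [inv_mul_eq_div, mul_comm (c + ε) K, mul_div_assoc,
              div_self han.ne', mul_one]
    -- compare with convergent majorant
    have hg : Tendsto (fun n => ((K * C₀ / a n + K * (c + ε) : ℝ) : EReal)) atTop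
        (nhds ((K * (c + ε) : ℝ) : EReal)) := by
      have h1 : Tendsto (fun n => K * C₀ / a n + K * (c + ε)) atTop
          (nhds (K * (c + ε))) := by
        have := Tendsto.div_atTop (tendsto_const_nhds (x := K * C₀)) ha'
        have h2 := this.add_const (K * (c + ε))
        simpa using h2
      exact (continuous_coe_real_ereal.tendsto _).comp h1
    calc Filter.limsup _ atTop
        ≤ Filter.limsup (fun n => ((K * C₀ / a n + K * (c + ε) : ℝ) : EReal)) atTop := by
          refine limsup_le_limsup ?_
          filter_upwards [eventually_atTop.2 ⟨N₀, hpt⟩] with n hn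
          exact_mod_cast EReal.coe_le_coe_iff.2 hn
      _ = ((K * (c + ε) : ℝ) : EReal) := hg.limsup_eq
  -- conclude
  rw [hLc, ← EReal.coe_mul]
  rw [← EReal.le_of_forall_lt_iff_le]
  intro z hz
  have hz' : K * c < z := by exact_mod_cast hz
  set δ : ℝ := z - K * c with hδ
  have hδ0 : 0 < δ := by linarith
  have hεpos : 0 < δ / (K + 1) := by positivity
  refine (key _ hεpos).trans ?_
  have : K * (c + δ / (K + 1)) ≤ z := by
    have hKle : K * (δ / (K + 1)) ≤ δ := by
      rw [mul_div_assoc'] at *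
      rw [div_le_iff₀ (by linarith)] at *
      nlinarith
    nlinarith
  exact_mod_cast this
end

section
/- Let (Y(j))_{j≥1} be a sequence of independent and identically distributed real random variables with E[Y(1)] = 0 and E[|Y(1)|] < ∞, let μ > 0, and set H(n) = exp(μn + Σ_{j=1}^n Y(j)) for n ≥ 1. Let x solve x(n+1) = Σ_{j=0}^n k(n−j) x(j) + H(n+1) for n ≥ 0 with x(0) > 0, where k : ℕ → ℝ is nonnegative with Σ_{j=0}^∞ k(j) < 1. Then almost surely: x(n) > 0 for all n ≥ 0, x(n) → ∞ as n → ∞, and (1/n) log x(n) → μ as n → ∞. -/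
open Filter Finset MeasureTheory ProbabilityTheory

open Real Topology

/-!
The argument is pathwise. By the strong law of large numbers, almost surely
`(1/n) log H(n) = μ + (Y(1) + ⋯ + Y(n)) / n → μ`. Since `k ≥ 0`, the solution dominates the
forcing, which gives positivity, `x → ∞` and the lower bound on `(1/n) log x(n)`. For the upper
bound, fix `c > μ`: then `H(n) ≤ C e^{cn}`, and because the kernel has mass below `1`, an
induction on the recursion gives `x(n) ≤ M e^{cn}`.
-/

section Volterra

variable {k f x : ℕ → ℝ}

lemma sum_range_succ_reflect (k : ℕ → ℝ) (n : ℕ) :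
    ∑ j ∈ range (n + 1), k (n - j) = ∑ j ∈ range (n + 1), k j := by
  simpa using Finset.sum_range_reflect k (n + 1)

lemma volterra_pos (hk : ∀ j, 0 ≤ k j) (hf : ∀ n, 0 < f (n + 1)) (hx0 : 0 < x 0)
    (hx : ∀ n, x (n + 1) = ∑ j ∈ range (n + 1), k (n - j) * x j + f (n + 1)) (n : ℕ) :
    0 < x n := by
  induction n using Nat.strong_induction_on with
  | _ n ih =>
    cases n with
    | zero => exact hx0
    | succ n =>
      rw [hx]
      exact add_pos_of_nonneg_of_pos
        (sum_nonneg fun j hj => mul_nonneg (hk _) (ih j (by simp at hj; omega)).le) (hf n)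

lemma forcing_le_volterra (hk : ∀ j, 0 ≤ k j) (hx_nonneg : ∀ n, 0 ≤ x n)
    (hx : ∀ n, x (n + 1) = ∑ j ∈ range (n + 1), k (n - j) * x j + f (n + 1)) (n : ℕ) :
    f (n + 1) ≤ x (n + 1) := by
  rw [hx]
  linarith [sum_nonneg fun j (_ : j ∈ range (n + 1)) => mul_nonneg (hk (n - j)) (hx_nonneg j)]

/-- Since the kernel has mass `K < 1`, any `M ≥ 1 / (1 - K)` absorbs the memory term:
`K M g + g ≤ M g`. -/
lemma exists_volterra_le_mul_of_forcing_le {g : ℕ → ℝ} (hk : ∀ j, 0 ≤ k j) (hks : Summable k)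
    (hk1 : ∑' j, k j < 1)
    (hx : ∀ n, x (n + 1) = ∑ j ∈ range (n + 1), k (n - j) * x j + f (n + 1))
    (hg : Monotone g) (hg0 : 0 < g 0) (hfg : ∀ n, f (n + 1) ≤ g (n + 1)) :
    ∃ M, ∀ n, x n ≤ M * g n := by
  set K := ∑' j, k j
  set M := max (x 0 / g 0) (1 / (1 - K))
  have hKM : 1 ≤ M * (1 - K) := by
    rw [← div_le_iff₀ (by linarith)]
    exact le_max_right _ _
  have hM : 0 ≤ M := le_trans (one_div_pos.2 (sub_pos.2 hk1)).le (le_max_right _ _)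
  refine ⟨M, fun n => ?_⟩
  induction n using Nat.strong_induction_on with
  | _ n ih =>
    cases n with
    | zero => exact (div_le_iff₀ hg0).1 (le_max_left _ _)
    | succ n =>
      have hgn : 0 ≤ g (n + 1) := hg0.le.trans (hg (Nat.zero_le _))
      have hmass : ∑ j ∈ range (n + 1), k (n - j) ≤ K := by
        rw [sum_range_succ_reflect]
        exact hks.sum_le_tsum _ fun j _ => hk j
      have hmemory : ∑ j ∈ range (n + 1), k (n - j) * x j ≤ K * (M * g (n + 1)) :=
        calc ∑ j ∈ range (n + 1), k (n - j) * x j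
            ≤ ∑ j ∈ range (n + 1), k (n - j) * (M * g (n + 1)) := by
              refine sum_le_sum fun j hj => mul_le_mul_of_nonneg_left ?_ (hk _)
              have hj : j < n + 1 := mem_range.1 hj
              exact (ih j (by omega)).trans
                (mul_le_mul_of_nonneg_left (hg (by omega)) hM)
          _ = (∑ j ∈ range (n + 1), k (n - j)) * (M * g (n + 1)) := by rw [sum_mul]
          _ ≤ K * (M * g (n + 1)) := mul_le_mul_of_nonneg_right hmass (by positivity)
      calc x (n + 1) ≤ K * (M * g (n + 1)) + g (n + 1) := by rw [hx]; gcongr; exact hfg n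
        _ ≤ M * g (n + 1) := by nlinarith

end Volterra

lemma exists_pos_forall_le_mul_of_eventually_le {u v : ℕ → ℝ} (hv : ∀ n, 0 < v n)
    (h : ∀ᶠ n in atTop, u n ≤ v n) : ∃ C, 0 < C ∧ ∀ n, u n ≤ C * v n := by
  obtain ⟨N, hN⟩ := eventually_atTop.1 h
  have hterm : ∀ m, 0 ≤ |u m| / v m := fun m => div_nonneg (abs_nonneg _) (hv m).le
  set C := ∑ m ∈ range N, |u m| / v m
  have hC : 0 ≤ C := sum_nonneg fun m _ => hterm m
  refine ⟨1 + C, by linarith, fun n => ?_⟩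
  rcases lt_or_ge n N with hn | hn
  · have hn' : |u n| / v n ≤ C := single_le_sum (fun m _ => hterm m) (mem_range.2 hn)
    calc u n ≤ |u n| / v n * v n := by rw [div_mul_cancel₀ _ (hv n).ne']; exact le_abs_self _
      _ ≤ (1 + C) * v n := mul_le_mul_of_nonneg_right (by linarith) (hv n).le
  · nlinarith [hN n hn, hv n]

lemma tendsto_atTop_of_tendsto_log_div {f : ℕ → ℝ} {μ : ℝ} (hμ : 0 < μ)
    (hf : ∀ᶠ n in atTop, 0 < f n)
    (h : Tendsto (fun n : ℕ => (1 / (n : ℝ)) * log (f n)) atTop (𝓝 μ)) :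
    Tendsto f atTop atTop := by
  have hlog : Tendsto (fun n => log (f n)) atTop atTop := by
    refine ((tendsto_natCast_atTop_atTop (R := ℝ)).atTop_mul_pos hμ h).congr' ?_
    filter_upwards [eventually_ge_atTop 1] with n hn
    have : (n : ℝ) ≠ 0 := by positivity
    field_simp
  refine (tendsto_exp_atTop.comp hlog).congr' ?_
  filter_upwards [hf] with n hn using exp_log hn

lemma eventually_le_exp_of_tendsto_log_div {f : ℕ → ℝ} {μ c : ℝ} (hμc : μ < c)
    (hf : ∀ᶠ n in atTop, 0 < f n)
    (h : Tendsto (fun n : ℕ => (1 / (n : ℝ)) * log (f n)) atTop (𝓝 μ)) :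
    ∀ᶠ n : ℕ in atTop, f n ≤ exp (c * n) := by
  filter_upwards [h.eventually (gt_mem_nhds hμc), hf, eventually_ge_atTop 1] with n hlt hpos hn
  have hn0 : (0 : ℝ) < n := by exact_mod_cast hn
  rw [← log_le_iff_le_exp hpos]
  rw [one_div, inv_mul_lt_iff₀ hn0] at hlt
  linarith

lemma eventually_log_div_lt_of_le_mul_exp {x : ℕ → ℝ} (hx : ∀ n, 0 < x n) {M c b : ℝ}
    (hM : ∀ n : ℕ, x n ≤ M * exp (c * n)) (hcb : c < b) :
    ∀ᶠ n : ℕ in atTop, (1 / (n : ℝ)) * log (x n) < b := by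
  have hM0 : 0 < M := by simpa using (hx 0).trans_le (hM 0)
  have hlim : Tendsto (fun n : ℕ => log M / n + c) atTop (𝓝 c) := by
    simpa using (tendsto_const_div_atTop_nhds_zero_nat (log M)).add_const c
  filter_upwards [hlim.eventually (gt_mem_nhds hcb), eventually_ge_atTop 1] with n hlt hn
  have hn0 : (n : ℝ) ≠ 0 := by positivity
  have hlog : log (x n) ≤ log M + c * n := by
    rw [← log_exp (c * n), ← log_mul hM0.ne' (exp_pos _).ne']
    exact log_le_log (hx n) (hM n)
  calc (1 / (n : ℝ)) * log (x n) ≤ (1 / (n : ℝ)) * (log M + c * n) :=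
        mul_le_mul_of_nonneg_left hlog (by positivity)
    _ = log M / n + c := by field_simp
    _ < b := hlt

theorem volterra_growth_of_tendsto_log_div {μ : ℝ} (hμ : 0 < μ) {k f x : ℕ → ℝ}
    (hk : ∀ j, 0 ≤ k j) (hks : Summable k) (hk1 : ∑' j, k j < 1) (hf : ∀ n, 0 < f (n + 1))
    (hflog : Tendsto (fun n : ℕ => (1 / (n : ℝ)) * log (f n)) atTop (𝓝 μ)) (hx0 : 0 < x 0)
    (hx : ∀ n, x (n + 1) = ∑ j ∈ range (n + 1), k (n - j) * x j + f (n + 1)) :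
    (∀ n, 0 < x n) ∧ Tendsto x atTop atTop ∧
      Tendsto (fun n : ℕ => (1 / (n : ℝ)) * log (x n)) atTop (𝓝 μ) := by
  have hpos := volterra_pos hk hf hx0 hx
  have hfx := forcing_le_volterra hk (fun n => (hpos n).le) hx
  have hf' : ∀ᶠ n in atTop, 0 < f n := by
    filter_upwards [eventually_ge_atTop 1] with n hn
    obtain ⟨m, rfl⟩ := Nat.exists_eq_add_of_le' hn
    exact hf m
  refine ⟨hpos, ?_, tendsto_order.2 ⟨fun a ha => ?_, fun b hb => ?_⟩⟩
  · exact (tendsto_add_atTop_iff_nat 1).1 <| tendsto_atTop_mono hfx <|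
      (tendsto_add_atTop_iff_nat 1).2 (tendsto_atTop_of_tendsto_log_div hμ hf' hflog)
  · filter_upwards [hflog.eventually (lt_mem_nhds ha), eventually_ge_atTop 1] with n hlt hn
    obtain ⟨m, rfl⟩ := Nat.exists_eq_add_of_le' hn
    exact hlt.trans_le <| mul_le_mul_of_nonneg_left (log_le_log (hf m) (hfx m)) (by positivity)
  · obtain ⟨c, hμc, hcb⟩ := exists_between hb
    have hc : 0 ≤ c := by linarith
    obtain ⟨C, hC, hfC⟩ := exists_pos_forall_le_mul_of_eventually_le (fun n => exp_pos (c * n))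
      (eventually_le_exp_of_tendsto_log_div hμc hf' hflog)
    have hmono : Monotone fun n : ℕ => C * exp (c * n) := fun m n hmn =>
      mul_le_mul_of_nonneg_left (exp_le_exp.2 (by gcongr)) hC.le
    obtain ⟨M, hM⟩ := exists_volterra_le_mul_of_forcing_le hk hks hk1 hx hmono
      (by positivity) fun n => hfC (n + 1)
    exact eventually_log_div_lt_of_le_mul_exp hpos (M := M * C)
      (fun n => (hM n).trans_eq (mul_assoc _ _ _).symm) hcb

lemma ae_tendsto_sum_Icc_div {Ω : Type*} [MeasurableSpace Ω] {P : Measure Ω}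
    (Y : ℕ → Ω → ℝ) (hindep : iIndepFun Y P) (hident : ∀ j, IdentDistrib (Y j) (Y 1) P P)
    (hint : Integrable (Y 1) P) :
    ∀ᵐ ω ∂P, Tendsto (fun n : ℕ => (∑ j ∈ Icc 1 n, Y j ω) / n) atTop (𝓝 P[Y 1]) := by
  have hslln := strong_law_ae_real (fun i => Y (i + 1)) hint
    (fun i j hij => hindep.indepFun (by simpa using hij))
    (fun i => (hident (i + 1)).trans (hident 1).symm)
  filter_upwards [hslln] with ω hω
  convert hω using 3 with n
  rw [← Ico_add_one_right_eq_Icc, sum_Ico_eq_sum_range]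
  simp [add_comm]

theorem stmt14_general {Ω : Type*} [MeasurableSpace Ω]
    (P : Measure Ω)
    (Y : ℕ → Ω → ℝ)
    (hYindep : iIndepFun Y P)
    (hYident : ∀ j, IdentDistrib (Y j) (Y 1) P P)
    (hYint : Integrable (Y 1) P)
    (hYmean : ∫ ω, Y 1 ω ∂P = 0)
    (μ : ℝ) (hμ : 0 < μ)
    (k : ℕ → ℝ) (hkpos : ∀ j, 0 ≤ k j) (hksum : Summable k)
    (hk1 : ∑' j : ℕ, k j < 1)
    (H : ℕ → Ω → ℝ)
    (hH : ∀ n : ℕ, 1 ≤ n → ∀ ω,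
      H n ω = Real.exp (μ * n + ∑ j ∈ Finset.Icc 1 n, Y j ω))
    (x : Ω → ℕ → ℝ) (hx0 : ∀ ω, 0 < x ω 0)
    (hx : ∀ ω, ∀ n : ℕ,
      x ω (n + 1) = (∑ j ∈ Finset.range (n + 1), k (n - j) * x ω j) + H (n + 1) ω) :
    ∀ᵐ ω ∂P,
      (∀ n : ℕ, 0 < x ω n) ∧
      Tendsto (x ω) atTop atTop ∧
      Tendsto (fun n : ℕ => (1 / (n : ℝ)) * Real.log (x ω n)) atTop (nhds μ) := by
  filter_upwards [ae_tendsto_sum_Icc_div Y hYindep hYident hYint] with ω hω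
  rw [hYmean] at hω
  have hlogH : Tendsto (fun n : ℕ => (1 / (n : ℝ)) * Real.log (H n ω)) atTop (𝓝 μ) := by
    refine (by simpa using hω.const_add μ : Tendsto _ atTop (𝓝 μ)).congr' ?_
    filter_upwards [eventually_ge_atTop 1] with n hn
    have hn0 : (n : ℝ) ≠ 0 := by positivity
    rw [hH n hn, Real.log_exp]
    field_simp
  exact volterra_growth_of_tendsto_log_div hμ hkpos hksum hk1
    (fun n => by rw [hH _ n.succ_pos]; exact Real.exp_pos _) hlogH (hx0 ω) (hx ω)

theorem stmt14 {Ω : Type*} [MeasurableSpace Ω]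
    (P : Measure Ω) [IsProbabilityMeasure P]
    (Y : ℕ → Ω → ℝ) (hYmeas : ∀ j, Measurable (Y j))
    (hYindep : iIndepFun Y P)
    (hYident : ∀ j, IdentDistrib (Y j) (Y 1) P P)
    (hYint : Integrable (Y 1) P)
    (hYmean : ∫ ω, Y 1 ω ∂P = 0)
    (μ : ℝ) (hμ : 0 < μ)
    (k : ℕ → ℝ) (hkpos : ∀ j, 0 ≤ k j) (hksum : Summable k)
    (hk1 : ∑' j : ℕ, k j < 1)
    (H : ℕ → Ω → ℝ)
    (hH : ∀ n : ℕ, 1 ≤ n → ∀ ω,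
      H n ω = Real.exp (μ * n + ∑ j ∈ Finset.Icc 1 n, Y j ω))
    (x : Ω → ℕ → ℝ) (hx0 : ∀ ω, 0 < x ω 0)
    (hx : ∀ ω, ∀ n : ℕ,
      x ω (n + 1) = (∑ j ∈ Finset.range (n + 1), k (n - j) * x ω j) + H (n + 1) ω) :
    ∀ᵐ ω ∂P,
      (∀ n : ℕ, 0 < x ω n) ∧
      Tendsto (x ω) atTop atTop ∧
      Tendsto (fun n : ℕ => (1 / (n : ℝ)) * Real.log (x ω n)) atTop (nhds μ) :=
  stmt14_general P Y hYindep hYident hYint hYmean μ hμ k hkpos hksum hk1 H hH x hx0 hx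
end

section
/- Let (H(n))_{n≥0} be a sequence of independent and identically distributed real random variables supported on ℝ with continuous symmetric distribution function F, and set G(x) = 1 − F(x). Suppose the function x ↦ G⁻¹(1/x) is μ-super-slowly varying at infinity with uniformity parameter Δ > 0, where μ : (0,∞) → (1,∞) is non-decreasing and satisfies Σ_{n=1}^∞ 1/(n μ^{δ*}(n)) < ∞ for some δ* ∈ (0,Δ]. Then limsup_{n→∞} |H(n)| / G⁻¹(1/n) = 1 almost surely. -/
open Filter MeasureTheory ProbabilityTheory Topology

/-! Write `a n = G⁻¹(1/n)`, so that `P(H n > a n) = 1/n`. By symmetry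
`P(|H n| > (1+ε) a n) ≤ 2 G((1+ε) a n)`, and super-slow variation at `δ*` gives
`(1+ε) a n ≥ G⁻¹(1/(n μ(n)^δ*))` for large `n`; hence these probabilities are summable and the first
Borel–Cantelli lemma bounds the limsup by `1 + ε`. Conversely `P(H n > (1-ε) a n) ≥ 1/n` is not
summable, so independence and the second Borel–Cantelli lemma give the bound `1 - ε`. -/

theorem EReal.limsup_coe_eq_of_forall_pos {α : Type*} {l : Filter α} {u : α → ℝ} {c : ℝ}
    (hup : ∀ ε > 0, ∀ᶠ n in l, u n ≤ c + ε) (hlow : ∀ ε > 0, ∃ᶠ n in l, c - ε ≤ u n) :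
    limsup (fun n => (u n : EReal)) l = c := by
  refine le_antisymm (le_of_forall_gt_imp_ge_of_dense fun y hy => ?_)
    (le_of_forall_lt_imp_le_of_dense fun y hy => ?_)
  · obtain ⟨r, hcr, hry⟩ := EReal.lt_iff_exists_real_btwn.1 hy
    have hε : 0 < r - c := by linarith [EReal.coe_lt_coe_iff.1 hcr]
    refine (limsup_le_of_le (by isBoundedDefault) ((hup _ hε).mono fun n hn => ?_)).trans hry.le
    exact EReal.coe_le_coe_iff.2 (by linarith)
  · obtain ⟨r, hyr, hrc⟩ := EReal.lt_iff_exists_real_btwn.1 hy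
    have hε : 0 < c - r := by linarith [EReal.coe_lt_coe_iff.1 hrc]
    refine hyr.le.trans (le_limsup_of_frequently_le ((hlow _ hε).mono fun n hn => ?_)
      (by isBoundedDefault))
    exact EReal.coe_le_coe_iff.2 (by linarith)

theorem ae_forall_pos_of_mono {Ω : Type*} [MeasurableSpace Ω] {μ : Measure Ω}
    {p : Ω → ℝ → Prop} (hmono : ∀ ω ε ε', ε ≤ ε' → p ω ε → p ω ε')
    (h : ∀ ε > 0, ∀ᵐ ω ∂μ, p ω ε) : ∀ᵐ ω ∂μ, ∀ ε > 0, p ω ε := by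
  filter_upwards [ae_all_iff.2 fun k : ℕ => h (1 / (k + 1)) Nat.one_div_pos_of_nat]
    with ω hω ε hε
  obtain ⟨k, hk⟩ := exists_nat_one_div_lt hε
  exact hmono ω _ _ hk.le (hω k)

theorem ProbabilityTheory.iIndepFun.iIndepSet_preimage {Ω ι β : Type*} [MeasurableSpace Ω]
    [MeasurableSpace β] {μ : Measure Ω} {f : ι → Ω → β} (hf : iIndepFun f μ)
    (hfm : ∀ i, Measurable (f i)) {B : ι → Set β} (hB : ∀ i, MeasurableSet (B i)) :
    iIndepSet (fun i => f i ⁻¹' B i) μ :=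
  (iIndepSet_iff_meas_biInter fun i => hfm i (hB i)).2 fun S =>
    hf.measure_inter_preimage_eq_mul S fun i _ => hB i

section BorelCantelli

variable {Ω : Type*} [MeasurableSpace Ω] {μ : Measure Ω} {s : ℕ → Set Ω}

theorem ae_eventually_notMem_of_summable [IsFiniteMeasure μ] {g : ℕ → ℝ} (hg : Summable g)
    (hs : ∀ᶠ n in atTop, μ.real (s n) ≤ g n) : ∀ᵐ ω ∂μ, ∀ᶠ n in atTop, ω ∉ s n := by
  have hsum : Summable fun n => μ.real (s n) :=
    hg.of_norm_bounded_eventually_nat (hs.mono fun n hn => by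
      rwa [Real.norm_of_nonneg measureReal_nonneg])
  refine ae_eventually_notMem ?_
  simpa only [ofReal_measureReal (measure_ne_top μ _)] using hsum.tsum_ofReal_ne_top

theorem ae_frequently_mem_of_not_summable [IsProbabilityMeasure μ]
    (hsm : ∀ n, MeasurableSet (s n)) (hs : iIndepSet s μ)
    (hdiv : ¬ Summable fun n => μ.real (s n)) : ∀ᵐ ω ∂μ, ∃ᶠ n in atTop, ω ∈ s n := by
  have htop : ∑' n, μ (s n) = ⊤ := by
    by_contra h
    exact hdiv (ENNReal.summable_toReal h)
  have hlimsup : MeasurableSet (limsup s atTop) := .measurableSet_limsup hsm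
  simp_rw [← mem_limsup_iff_frequently_mem]
  rw [ae_mem_iff_measure_eq hlimsup.nullMeasurableSet, measure_limsup_eq_one hsm hs htop,
    measure_univ]

end BorelCantelli

section DistributionFunction

variable {Ω : Type*} [MeasurableSpace Ω] {P : Measure Ω} [IsProbabilityMeasure P]
  {X : Ω → ℝ} {F : ℝ → ℝ}

theorem measureReal_lt_eq_one_sub (hX : Measurable X)
    (hXF : ∀ t, P.real {ω | X ω ≤ t} = F t) (t : ℝ) :
    P.real {ω | t < X ω} = 1 - F t := by
  have hcompl : {ω | t < X ω} = {ω | X ω ≤ t}ᶜ := by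
    ext ω
    simp
  rw [hcompl, probReal_compl_eq_one_sub (measurableSet_le hX measurable_const), hXF]

theorem measureReal_lt_abs_le (hX : Measurable X) (hXF : ∀ t, P.real {ω | X ω ≤ t} = F t)
    (hFsymm : ∀ t, F (-t) = 1 - F t) (t : ℝ) :
    P.real {ω | t < |X ω|} ≤ 2 * (1 - F t) := by
  have hsub : {ω | t < |X ω|} ⊆ {ω | t < X ω} ∪ {ω | X ω ≤ -t} := by
    intro ω (hω : t < |X ω|)
    rcases lt_abs.1 hω with h | h
    · exact Or.inl h
    · exact Or.inr (show X ω ≤ -t by linarith)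
  calc P.real {ω | t < |X ω|} ≤ P.real {ω | t < X ω} + P.real {ω | X ω ≤ -t} :=
        (measureReal_mono hsub).trans (measureReal_union_le _ _)
    _ = 2 * (1 - F t) := by rw [measureReal_lt_eq_one_sub hX hXF, hXF, hFsymm]; ring

end DistributionFunction

section Quantile

variable {F Ginv : ℝ → ℝ} (hFmono : Monotone F) (hF0 : F 0 ≤ 1 / 2)
  (hGinv : ∀ p ∈ Set.Ioo (0 : ℝ) 1, 1 - F (Ginv p) = p)
include hFmono hF0 hGinv

theorem eventually_quantile_pos : ∀ᶠ t in atTop, 0 < Ginv (1 / t) := by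
  filter_upwards [eventually_gt_atTop 2] with t ht
  have hp : 1 / t < 1 / 2 := by gcongr
  have hq := hGinv (1 / t) ⟨by positivity, by linarith⟩
  by_contra hle
  linarith [hFmono (not_lt.1 hle)]

theorem eventually_tail_mul_quantile_le {μf : ℝ → ℝ} {δ : ℝ} (hμf : ∀ t, 0 < t → 1 < μf t)
    (hδ : 0 < δ)
    (hratio : Tendsto (fun t => Ginv (1 / (t * μf t ^ δ)) / Ginv (1 / t)) atTop (𝓝 1))
    {ε : ℝ} (hε : 0 < ε) :
    ∀ᶠ t in atTop, 1 - F ((1 + ε) * Ginv (1 / t)) ≤ 1 / (t * μf t ^ δ) := by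
  filter_upwards [eventually_gt_atTop 1, eventually_quantile_pos hFmono hF0 hGinv,
    hratio.eventually (gt_mem_nhds (lt_add_of_pos_right 1 hε))] with t ht ha hlt
  have hμδ : 1 < μf t ^ δ := Real.one_lt_rpow (hμf t (by linarith)) hδ
  have hq : 1 / (t * μf t ^ δ) ∈ Set.Ioo (0 : ℝ) 1 :=
    ⟨by positivity, (div_lt_one (by positivity)).2 (by nlinarith)⟩
  have hle : Ginv (1 / (t * μf t ^ δ)) ≤ (1 + ε) * Ginv (1 / t) := ((div_lt_iff₀ ha).1 hlt).le
  linarith [hFmono hle, hGinv _ hq]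

theorem not_summable_tail_mul_quantile {ε : ℝ} (hε : 0 ≤ ε) :
    ¬ Summable fun n : ℕ => 1 - F ((1 - ε) * Ginv (1 / n)) := by
  intro hs
  refine Real.not_summable_one_div_natCast (hs.of_norm_bounded_eventually_nat ?_)
  filter_upwards [tendsto_natCast_atTop_atTop.eventually (eventually_quantile_pos hFmono hF0 hGinv),
    eventually_ge_atTop 2] with n ha hn
  have hn' : (2 : ℝ) ≤ n := by exact_mod_cast hn
  have hq := hGinv (1 / n) ⟨by positivity, by rw [div_lt_one (by linarith)]; linarith⟩
  have hle : (1 - ε) * Ginv (1 / n) ≤ Ginv (1 / n) := by nlinarith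
  rw [Real.norm_of_nonneg (by positivity)]
  linarith [hFmono hle]

end Quantile

section IIDSequence

variable {Ω : Type*} [MeasurableSpace Ω] {P : Measure Ω} [IsProbabilityMeasure P]
  {H : ℕ → Ω → ℝ} {F : ℝ → ℝ} (hHmeas : ∀ n, Measurable (H n))
  (hHdist : ∀ n t, P.real {ω | H n ω ≤ t} = F t)
include hHmeas hHdist

theorem ae_eventually_abs_le_of_summable_tail (hFsymm : ∀ t, F (-t) = 1 - F t)
    {c q : ℕ → ℝ} (hq : Summable q) (htail : ∀ᶠ n in atTop, 1 - F (c n) ≤ q n) :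
    ∀ᵐ ω ∂P, ∀ᶠ n in atTop, |H n ω| ≤ c n := by
  have hmeas : ∀ᶠ n in atTop, P.real {ω | c n < |H n ω|} ≤ 2 * q n :=
    htail.mono fun n hn =>
      (measureReal_lt_abs_le (hHmeas n) (hHdist n) hFsymm (c n)).trans (by linarith)
  filter_upwards [ae_eventually_notMem_of_summable (hq.mul_left 2) hmeas] with ω hω
  exact hω.mono fun n hn => not_lt.1 hn

theorem ae_frequently_lt_of_not_summable_tail (hHindep : iIndepFun H P) {c : ℕ → ℝ}
    (hdiv : ¬ Summable fun n => 1 - F (c n)) :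
    ∀ᵐ ω ∂P, ∃ᶠ n in atTop, c n < H n ω := by
  refine ae_frequently_mem_of_not_summable (s := fun n => H n ⁻¹' Set.Ioi (c n))
    (fun n => hHmeas n measurableSet_Ioi)
    (hHindep.iIndepSet_preimage hHmeas fun n => measurableSet_Ioi) ?_
  simpa only [Set.preimage, Set.mem_Ioi, measureReal_lt_eq_one_sub (hHmeas _) (hHdist _)]
    using hdiv

end IIDSequence

theorem stmt15_general {Ω : Type*} [MeasurableSpace Ω]
    (P : Measure Ω) [IsProbabilityMeasure P]
    (H : ℕ → Ω → ℝ) (hHmeas : ∀ n, Measurable (H n))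
    (hHindep : iIndepFun H P)
    (F : ℝ → ℝ) (hFmono : Monotone F)
    -- each `H n` has distribution function `F`
    (hHdist : ∀ n : ℕ, ∀ t : ℝ, (P {ω | H n ω ≤ t}).toReal = F t)
    -- `F` is symmetric
    (hFsymm : ∀ t : ℝ, F (-t) = 1 - F t)
    -- `Ginv` is the inverse of `G = 1 - F`
    (Ginv : ℝ → ℝ) (hGinv : ∀ p ∈ Set.Ioo (0 : ℝ) 1, 1 - F (Ginv p) = p)
    (μf : ℝ → ℝ)
    (hμfgt : ∀ t : ℝ, 0 < t → 1 < μf t)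
    (Δ : ℝ)
    -- `x ↦ Ginv (1/x)` is `μf`-super-slowly varying with uniformity parameter `Δ`
    (hSSV : ∀ ε : ℝ, 0 < ε → ∃ X : ℝ, ∀ t : ℝ, X ≤ t → ∀ δ ∈ Set.Icc (0 : ℝ) Δ,
      |Ginv (1 / (t * μf t ^ δ)) / Ginv (1 / t) - 1| < ε)
    (δs : ℝ) (hδs : δs ∈ Set.Ioc (0 : ℝ) Δ)
    (hsum : Summable (fun n : ℕ => 1 / ((n : ℝ) * μf n ^ δs))) :
    ∀ᵐ ω ∂P,
      Filter.limsup
        (fun n : ℕ => ((|H n ω| / Ginv (1 / (n : ℝ)) : ℝ) : EReal)) atTop = 1 := by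
  have hF0 : F 0 ≤ 1 / 2 := by linarith [neg_zero (G := ℝ) ▸ hFsymm 0]
  have hratio : Tendsto (fun t => Ginv (1 / (t * μf t ^ δs)) / Ginv (1 / t)) atTop (𝓝 1) :=
    Metric.tendsto_atTop.2 fun ε hε =>
      (hSSV ε hε).imp fun X hX t ht => hX t ht δs ⟨hδs.1.le, hδs.2⟩
  have hpos : ∀ᶠ n : ℕ in atTop, 0 < Ginv (1 / n) :=
    tendsto_natCast_atTop_atTop.eventually (eventually_quantile_pos hFmono hF0 hGinv)
  have hupper : ∀ ε > 0, ∀ᵐ ω ∂P, ∀ᶠ n in atTop, |H n ω| / Ginv (1 / n) ≤ 1 + ε := by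
    intro ε hε
    have htail := tendsto_natCast_atTop_atTop.eventually
      (eventually_tail_mul_quantile_le hFmono hF0 hGinv hμfgt hδs.1 hratio hε)
    filter_upwards [ae_eventually_abs_le_of_summable_tail hHmeas hHdist hFsymm hsum htail]
      with ω hω
    filter_upwards [hω, hpos] with n hn ha
    rw [div_le_iff₀ ha]
    linarith
  have hlower : ∀ ε > 0, ∀ᵐ ω ∂P, ∃ᶠ n in atTop, 1 - ε ≤ |H n ω| / Ginv (1 / n) := by
    intro ε hε
    filter_upwards [ae_frequently_lt_of_not_summable_tail hHmeas hHdist hHindep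
      (not_summable_tail_mul_quantile hFmono hF0 hGinv hε.le)] with ω hω
    refine (hω.and_eventually hpos).mono fun n ⟨hn, ha⟩ => ?_
    exact (le_div_iff₀ ha).2 (hn.le.trans (le_abs_self _))
  filter_upwards [ae_forall_pos_of_mono (fun _ _ _ hεε' h => h.mono fun _ _ => by linarith)
      hupper,
    ae_forall_pos_of_mono (fun _ _ _ hεε' h => h.mono fun _ _ => by linarith) hlower]
    with ω hu hl
  exact EReal.limsup_coe_eq_of_forall_pos hu hl

theorem stmt15 {Ω : Type*} [MeasurableSpace Ω]
    (P : Measure Ω) [IsProbabilityMeasure P]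
    (H : ℕ → Ω → ℝ) (hHmeas : ∀ n, Measurable (H n))
    (hHindep : iIndepFun H P)
    (F : ℝ → ℝ) (hFcont : Continuous F) (hFmono : Monotone F)
    -- each `H n` has distribution function `F`
    (hHdist : ∀ n : ℕ, ∀ t : ℝ, (P {ω | H n ω ≤ t}).toReal = F t)
    -- `F` is supported on all of ℝ
    (hFsupp : ∀ t : ℝ, 0 < F t ∧ F t < 1)
    -- `F` is symmetric
    (hFsymm : ∀ t : ℝ, F (-t) = 1 - F t)
    -- `Ginv` is the inverse of `G = 1 - F`
    (Ginv : ℝ → ℝ) (hGinv : ∀ p ∈ Set.Ioo (0 : ℝ) 1, 1 - F (Ginv p) = p)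
    (μf : ℝ → ℝ) (hμfmono : MonotoneOn μf (Set.Ioi 0))
    (hμfgt : ∀ t : ℝ, 0 < t → 1 < μf t)
    (Δ : ℝ) (hΔ : 0 < Δ)
    -- `x ↦ Ginv (1/x)` is `μf`-super-slowly varying with uniformity parameter `Δ`
    (hSSV : ∀ ε : ℝ, 0 < ε → ∃ X : ℝ, ∀ t : ℝ, X ≤ t → ∀ δ ∈ Set.Icc (0 : ℝ) Δ,
      |Ginv (1 / (t * μf t ^ δ)) / Ginv (1 / t) - 1| < ε)
    (δs : ℝ) (hδs : δs ∈ Set.Ioc (0 : ℝ) Δ)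
    (hsum : Summable (fun n : ℕ => 1 / ((n : ℝ) * μf n ^ δs))) :
    ∀ᵐ ω ∂P,
      Filter.limsup
        (fun n : ℕ => ((|H n ω| / Ginv (1 / (n : ℝ)) : ℝ) : EReal)) atTop = 1 :=
  stmt15_general P H hHmeas hHindep F hFmono hHdist hFsymm Ginv hGinv μf hμfgt Δ hSSV δs hδs hsum
end

section
/- Let (H(n))_{n≥0} be a sequence of independent and identically distributed real random variables supported on ℝ with continuous distribution function F. Suppose one of the following holds: (i) x ↦ 1 − F(x) is regularly varying at ∞ with index −α for some α > 0 and (1 − F(x))/F(−x) → ∞ as x → ∞; (ii) x ↦ F(−x) is regularly varying at ∞ with index −α for some α > 0 and (1 − F(x))/F(−x) → 0 as x → ∞; (iii) x ↦ 1 − F(x) is regularly varying at ∞ with index −α for some α > 0 and (1 − F(x))/F(−x) → L ∈ (0,∞) as x → ∞. Then for every positive, increasing, deterministic sequence (a(n))_{n≥0} with a(n) → ∞, either limsup_{n→∞} |H(n)|/a(n) = 0 almost surely, or limsup_{n→∞} |H(n)|/a(n) = ∞ almost surely. -/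
open Filter Finset MeasureTheory ProbabilityTheory

/-- `g` is regularly varying at `∞` with index `ρ`:
`g(λt)/g(t) → λ^ρ` as `t → ∞`, for every `λ > 0`. -/
def RegularlyVarying (g : ℝ → ℝ) (ρ : ℝ) : Prop :=
  ∀ lam : ℝ, 0 < lam →
    Tendsto (fun t : ℝ => g (lam * t) / g t) atTop (nhds (lam ^ ρ))

/-!
The two-sided tail `x ↦ P(|H n| > x) = 1 - F x + F (-x)` is the sum of the two one-sided tails,
one of which is regularly varying and dominates the other up to a constant factor, so it is
regularly varying itself. Consequently, for `c > 0` the terms of `∑ P(|H n| > c a n)` are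
asymptotically proportional to those of `∑ P(|H n| > a n)`, and the series converge for all `c`
or diverge for all `c`. In the first case the first Borel–Cantelli lemma gives `|H n| / a n → 0`
almost surely; in the second, independence and the second Borel–Cantelli lemma give
`|H n| > c a n` infinitely often for every `c`, almost surely.
-/

open Topology

theorem RegularlyVarying.add_of_tendsto_div {g h : ℝ → ℝ} {ρ c : ℝ}
    (hg : ∀ t, 0 < g t) (hh : ∀ t, 0 ≤ h t) (hrv : RegularlyVarying g ρ)
    (hc : Tendsto (fun t => h t / g t) atTop (𝓝 c)) :
    RegularlyVarying (fun t => g t + h t) ρ := by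
  have hc0 : 0 ≤ c := ge_of_tendsto' hc fun t => div_nonneg (hh t) (hg t).le
  intro lam hlam
  have hc' : Tendsto (fun t => h (lam * t) / g (lam * t)) atTop (𝓝 c) :=
    hc.comp (tendsto_id.const_mul_atTop hlam)
  have hratio : Tendsto (fun t => (1 + h (lam * t) / g (lam * t)) / (1 + h t / g t)) atTop
      (𝓝 ((1 + c) / (1 + c))) :=
    (tendsto_const_nhds.add hc').div (tendsto_const_nhds.add hc) (by positivity)
  -- `(g + h) (λt) / (g + h) t = g (λt) / g t * (1 + (h/g) (λt)) / (1 + (h/g) t)`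
  have hlim := (hrv lam hlam).mul hratio
  rw [div_self (by positivity), mul_one] at hlim
  refine hlim.congr fun t => ?_
  have := (hg t).ne'
  have := (hg (lam * t)).ne'
  field_simp

theorem RegularlyVarying.summable_comp_mul_iff {g : ℝ → ℝ} {ρ : ℝ}
    (hg : RegularlyVarying g ρ) {a : ℕ → ℝ} (ha : Tendsto a atTop atTop) {lam : ℝ}
    (hlam : 0 < lam) :
    Summable (fun n => g (lam * a n)) ↔ Summable (fun n => g (a n)) :=
  (Asymptotics.isTheta_of_div_tendsto_nhds_ne_zero ((hg lam hlam).comp ha)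
    (Real.rpow_pos_of_pos hlam ρ).ne').summable_iff_nat.symm

theorem exists_regularlyVarying_one_sub_add_comp_neg {F : ℝ → ℝ}
    (hF : ∀ t, 0 < F t ∧ F t < 1)
    (hcases :
      (∃ α : ℝ, 0 < α ∧ RegularlyVarying (fun t => 1 - F t) (-α) ∧
        Tendsto (fun t : ℝ => (1 - F t) / F (-t)) atTop atTop) ∨
      (∃ α : ℝ, 0 < α ∧ RegularlyVarying (fun t => F (-t)) (-α) ∧
        Tendsto (fun t : ℝ => (1 - F t) / F (-t)) atTop (nhds 0)) ∨
      (∃ α L : ℝ, 0 < α ∧ 0 < L ∧ RegularlyVarying (fun t => 1 - F t) (-α) ∧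
        Tendsto (fun t : ℝ => (1 - F t) / F (-t)) atTop (nhds L))) :
    ∃ ρ, RegularlyVarying (fun t => 1 - F t + F (-t)) ρ := by
  have hright : ∀ t, 0 < 1 - F t := fun t => sub_pos.2 (hF t).2
  have hleft : ∀ t, 0 < F (-t) := fun t => (hF (-t)).1
  rcases hcases with ⟨α, -, hrv, hlim⟩ | ⟨α, -, hrv, hlim⟩ | ⟨α, L, -, hL, hrv, hlim⟩
  · refine ⟨-α, hrv.add_of_tendsto_div (c := 0) hright (fun t => (hleft t).le) ?_⟩
    simpa only [Pi.inv_def, inv_div] using hlim.inv_tendsto_atTop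
  · simp_rw [add_comm (1 - F _)]
    exact ⟨-α, hrv.add_of_tendsto_div hleft (fun t => (hright t).le) hlim⟩
  · refine ⟨-α, hrv.add_of_tendsto_div (c := L⁻¹) hright (fun t => (hleft t).le) ?_⟩
    simpa only [Pi.inv_def, inv_div] using hlim.inv₀ hL.ne'

section Tail

variable {Ω : Type*} [MeasurableSpace Ω] {P : Measure Ω} [IsProbabilityMeasure P]
  {X : Ω → ℝ} {F : ℝ → ℝ}

theorem measureReal_lt_eq_of_continuous (hX : Measurable X) (hF : Continuous F)
    (hXF : ∀ t, (P {ω | X ω ≤ t}).toReal = F t) (t : ℝ) : P.real {ω | X ω < t} = F t := by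
  have := Measure.isProbabilityMeasure_map (μ := P) hX.aemeasurable
  have hcdf : ⇑(cdf (P.map X)) = F := funext fun s => by
    rw [cdf_eq_real, map_measureReal_apply hX measurableSet_Iic]
    exact hXF s
  have h := (cdf (P.map X)).measure_Iio (tendsto_cdf_atBot _) t
  rw [measure_cdf, hcdf, hF.continuousWithinAt.leftLim_eq, sub_zero,
    Measure.map_apply hX measurableSet_Iio] at h
  rw [measureReal_def]
  change (P (X ⁻¹' Set.Iio t)).toReal = F t
  rw [h, ENNReal.toReal_ofReal]
  exact hXF t ▸ ENNReal.toReal_nonneg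

theorem measureReal_lt_abs_eq_of_continuous (hX : Measurable X) (hF : Continuous F)
    (hXF : ∀ t, (P {ω | X ω ≤ t}).toReal = F t) {x : ℝ} (hx : 0 ≤ x) :
    P.real {ω | x < |X ω|} = 1 - F x + F (-x) := by
  have hsplit : {ω | x < |X ω|} = {ω | X ω ≤ x}ᶜ ∪ {ω | X ω < -x} := by
    ext ω
    simp only [Set.mem_ofPred_eq, Set.mem_union, Set.mem_compl_iff, not_le, lt_abs, lt_neg]
  have hdisj : Disjoint {ω | X ω ≤ x}ᶜ {ω | X ω < -x} :=
    Set.disjoint_left.2 fun ω h1 h2 => h1 (by simp only [Set.mem_ofPred_eq] at h2 ⊢; linarith)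
  rw [hsplit, measureReal_union hdisj (measurableSet_lt hX measurable_const),
    probReal_compl_eq_one_sub (measurableSet_le hX measurable_const),
    measureReal_lt_eq_of_continuous hX hF hXF, measureReal_def, hXF]

end Tail

section BorelCantelli

variable {Ω : Type*} [MeasurableSpace Ω] {P : Measure Ω} {Y : ℕ → Ω → ℝ}

theorem ae_tendsto_zero_of_summable_measureReal_lt_abs [IsFiniteMeasure P]
    (h : ∀ ε > 0, Summable fun n => P.real {ω | ε < |Y n ω|}) :
    ∀ᵐ ω ∂P, Tendsto (Y · ω) atTop (𝓝 0) := by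
  have heventually : ∀ m : ℕ, ∀ᵐ ω ∂P, ∀ᶠ n in atTop, |Y n ω| ≤ 1 / (m + 1) := by
    intro m
    have hne : ∑' n, P {ω | 1 / ((m : ℝ) + 1) < |Y n ω|} ≠ ⊤ := by
      simp_rw [← ofReal_measureReal (measure_ne_top P _)]
      rw [← ENNReal.ofReal_tsum_of_nonneg (fun n => measureReal_nonneg)
        (h _ Nat.one_div_pos_of_nat)]
      exact ENNReal.ofReal_ne_top
    filter_upwards [ae_eventually_notMem hne] with ω hω
    simpa only [Set.mem_ofPred_eq, not_lt] using hω
  filter_upwards [ae_all_iff.2 heventually] with ω hω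
  refine Metric.tendsto_nhds.2 fun ε hε => ?_
  obtain ⟨m, hm⟩ := exists_nat_one_div_lt hε
  filter_upwards [hω m] with n hn
  rw [Real.dist_0_eq_abs]
  exact hn.trans_lt hm

theorem ae_frequently_lt_of_not_summable_measureReal [IsProbabilityMeasure P]
    (hY : ∀ n, Measurable (Y n)) (hind : iIndepFun Y P) {c : ℝ}
    (h : ¬Summable fun n => P.real {ω | c < Y n ω}) :
    ∀ᵐ ω ∂P, ∃ᶠ n in atTop, c < Y n ω := by
  set s : ℕ → Set Ω := fun n => {ω | c < Y n ω}
  have hs : ∀ n, MeasurableSet (s n) := fun n => measurableSet_lt measurable_const (hY n)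
  have hind_s : iIndepSet s P := (iIndepSet_iff_meas_biInter hs).2 fun S =>
    hind.measure_inter_preimage_eq_mul S (sets := fun _ => Set.Ioi c) fun _ _ => measurableSet_Ioi
  have htop : ∑' n, P (s n) = ⊤ := by
    by_contra hne
    exact h (ENNReal.summable_toReal hne)
  have hlimsup : ∀ᵐ ω ∂P, ω ∈ limsup s atTop :=
    (ae_mem_iff_measure_eq (MeasurableSet.measurableSet_limsup hs).nullMeasurableSet).2
      (by rw [measure_limsup_eq_one hs hind_s htop, measure_univ])
  filter_upwards [hlimsup] with ω hω
  exact mem_limsup_iff_frequently_mem.1 hω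

end BorelCantelli

theorem EReal.limsup_coe_eq_top_of_forall_frequently {ι : Type*} {l : Filter ι} {u : ι → ℝ}
    (h : ∀ m : ℕ, ∃ᶠ i in l, (m : ℝ) ≤ u i) :
    limsup (fun i => (u i : EReal)) l = ⊤ := by
  refine EReal.eq_top_iff_forall_lt _ |>.2 fun y => ?_
  obtain ⟨m, hm⟩ := exists_nat_gt y
  refine (EReal.coe_lt_coe_iff.2 hm).trans_le (le_limsup_of_frequently_le ?_ ?_)
  · exact (h m).mono fun i hi => EReal.coe_le_coe_iff.2 hi
  · isBoundedDefault

theorem stmt16_general {Ω : Type*} [MeasurableSpace Ω]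
    (P : Measure Ω) [IsProbabilityMeasure P]
    (H : ℕ → Ω → ℝ) (hHmeas : ∀ n, Measurable (H n))
    (hHindep : iIndepFun H P)
    (F : ℝ → ℝ) (hFcont : Continuous F)
    -- each `H n` has distribution function `F`
    (hHdist : ∀ n : ℕ, ∀ t : ℝ, (P {ω | H n ω ≤ t}).toReal = F t)
    -- `F` is supported on all of ℝ
    (hFsupp : ∀ t : ℝ, 0 < F t ∧ F t < 1)
    (hcases :
      (∃ α : ℝ, 0 < α ∧ RegularlyVarying (fun t => 1 - F t) (-α) ∧
        Tendsto (fun t : ℝ => (1 - F t) / F (-t)) atTop atTop) ∨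
      (∃ α : ℝ, 0 < α ∧ RegularlyVarying (fun t => F (-t)) (-α) ∧
        Tendsto (fun t : ℝ => (1 - F t) / F (-t)) atTop (nhds 0)) ∨
      (∃ α L : ℝ, 0 < α ∧ 0 < L ∧ RegularlyVarying (fun t => 1 - F t) (-α) ∧
        Tendsto (fun t : ℝ => (1 - F t) / F (-t)) atTop (nhds L))) :
    ∀ a : ℕ → ℝ, (∀ n, 0 < a n) → StrictMono a → Tendsto a atTop atTop →
      ((∀ᵐ ω ∂P,
          Filter.limsup (fun n : ℕ => ((|H n ω| / a n : ℝ) : EReal)) atTop = 0) ∨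
       (∀ᵐ ω ∂P,
          Filter.limsup (fun n : ℕ => ((|H n ω| / a n : ℝ) : EReal)) atTop = ⊤)) := by
  intro a ha_pos _ ha_top
  obtain ⟨ρ, hG⟩ := exists_regularlyVarying_one_sub_add_comp_neg hFsupp hcases
  set G : ℝ → ℝ := fun t => 1 - F t + F (-t)
  set Y : ℕ → Ω → ℝ := fun n ω => |H n ω| / a n
  have hY_abs : ∀ n ω, |Y n ω| = Y n ω := fun n ω =>
    abs_of_nonneg (div_nonneg (abs_nonneg _) (ha_pos n).le)
  have hY_tail : ∀ c > 0, (fun n => P.real {ω | c < Y n ω}) = fun n => G (c * a n) :=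
    fun c hc => funext fun n => by
      rw [show G (c * a n) = _ from (measureReal_lt_abs_eq_of_continuous (hHmeas n) hFcont
        (hHdist n) (mul_pos hc (ha_pos n)).le).symm]
      simp_rw [Y, lt_div_iff₀ (ha_pos n)]
  by_cases hsum : Summable fun n => G (a n)
  · refine .inl ?_
    have hY_lim : ∀ᵐ ω ∂P, Tendsto (Y · ω) atTop (𝓝 0) :=
      ae_tendsto_zero_of_summable_measureReal_lt_abs fun ε hε => by
        simpa only [hY_abs, hY_tail ε hε] using (hG.summable_comp_mul_iff ha_top hε).2 hsum
    filter_upwards [hY_lim] with ω hω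
    exact (EReal.tendsto_coe.2 hω).limsup_eq
  · refine .inr ?_
    have hY_ind : iIndepFun Y P :=
      hHindep.comp (fun n x => |x| / a n) fun n => measurable_abs.div_const _
    have hY_freq (m : ℕ) : ∀ᵐ ω ∂P, ∃ᶠ n in atTop, (m + 1 : ℝ) < Y n ω := by
      refine ae_frequently_lt_of_not_summable_measureReal
        (fun n => (hHmeas n).abs.div_const _) hY_ind ?_
      rwa [hY_tail _ m.cast_add_one_pos, hG.summable_comp_mul_iff ha_top m.cast_add_one_pos]
    filter_upwards [ae_all_iff.2 hY_freq] with ω hω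
    exact EReal.limsup_coe_eq_top_of_forall_frequently fun m => (hω m).mono fun n hn => by linarith

theorem stmt16 {Ω : Type*} [MeasurableSpace Ω]
    (P : Measure Ω) [IsProbabilityMeasure P]
    (H : ℕ → Ω → ℝ) (hHmeas : ∀ n, Measurable (H n))
    (hHindep : iIndepFun H P)
    (F : ℝ → ℝ) (hFcont : Continuous F) (hFmono : Monotone F)
    -- each `H n` has distribution function `F`
    (hHdist : ∀ n : ℕ, ∀ t : ℝ, (P {ω | H n ω ≤ t}).toReal = F t)
    -- `F` is supported on all of ℝ
    (hFsupp : ∀ t : ℝ, 0 < F t ∧ F t < 1)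
    (hcases :
      (∃ α : ℝ, 0 < α ∧ RegularlyVarying (fun t => 1 - F t) (-α) ∧
        Tendsto (fun t : ℝ => (1 - F t) / F (-t)) atTop atTop) ∨
      (∃ α : ℝ, 0 < α ∧ RegularlyVarying (fun t => F (-t)) (-α) ∧
        Tendsto (fun t : ℝ => (1 - F t) / F (-t)) atTop (nhds 0)) ∨
      (∃ α L : ℝ, 0 < α ∧ 0 < L ∧ RegularlyVarying (fun t => 1 - F t) (-α) ∧
        Tendsto (fun t : ℝ => (1 - F t) / F (-t)) atTop (nhds L))) :
    ∀ a : ℕ → ℝ, (∀ n, 0 < a n) → StrictMono a → Tendsto a atTop atTop →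
      ((∀ᵐ ω ∂P,
          Filter.limsup (fun n : ℕ => ((|H n ω| / a n : ℝ) : EReal)) atTop = 0) ∨
       (∀ᵐ ω ∂P,
          Filter.limsup (fun n : ℕ => ((|H n ω| / a n : ℝ) : EReal)) atTop = ⊤)) :=
  stmt16_general P H hHmeas hHindep F hFcont hHdist hFsupp hcases
end

section
/- Let x solve the nonlinear Volterra equation x(n+1) = H(n+1) + Σ_{j=0}^n k(n−j) f(x(j)) for n ≥ 0 with x(0) = ξ, where k and the resolvent r are summable and f : ℝ → ℝ is continuous with f(x)/x → 1 as x → +∞ and as x → −∞. If (a(n))_{n≥0} is an increasing sequence with a(n) → ∞, then: (a) Λ_a|x| = 0 if and only if Λ_a|H| = 0; (b) Λ_a|x| ∈ (0,∞) if and only if Λ_a|H| ∈ (0,∞); (c) Λ_a|x| = ∞ if and only if Λ_a|H| = ∞. -/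
open Filter Finset

lemma aux_sublinear (f : ℝ → ℝ) (hfcont : Continuous f)
    (hftop : Tendsto (fun t : ℝ => f t / t) atTop (nhds 1))
    (hfbot : Tendsto (fun t : ℝ => f t / t) atBot (nhds 1))
    {δ : ℝ} (hδ : 0 < δ) : ∃ C : ℝ, 0 ≤ C ∧ ∀ t, |f t - t| ≤ δ * |t| + C := by
  have h1 : ∀ᶠ t : ℝ in atTop, |f t / t - 1| < δ := by
    have := hftop (Metric.ball_mem_nhds 1 hδ)
    simpa [Metric.mem_ball, Real.dist_eq] using this
  have h2 : ∀ᶠ t : ℝ in atBot, |f t / t - 1| < δ := by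
    have := hfbot (Metric.ball_mem_nhds 1 hδ)
    simpa [Metric.mem_ball, Real.dist_eq] using this
  obtain ⟨T1, hT1⟩ := eventually_atTop.mp h1
  obtain ⟨T2, hT2⟩ := eventually_atBot.mp h2
  set T : ℝ := max (max T1 (-T2)) 0 + 1 with hT
  have hT0 : 0 < T := by positivity
  have key : ∀ t : ℝ, t ≠ 0 → |f t / t - 1| < δ → |f t - t| ≤ δ * |t| := by
    intro t ht hlt
    have : f t - t = t * (f t / t - 1) := by field_simp
    rw [this, abs_mul, mul_comm]
    exact mul_le_mul_of_nonneg_right hlt.le (abs_nonneg t)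
  obtain ⟨C0, hC0⟩ := (isCompact_Icc (a := -T) (b := T)).exists_bound_of_continuousOn
    (Continuous.continuousOn (by continuity : Continuous (fun t : ℝ => f t - t)))
  refine ⟨max C0 0, le_max_right _ _, fun t => ?_⟩
  rcases le_or_gt |t| T with h | h
  · have := hC0 t (by constructor <;> [linarith [neg_abs_le t]; linarith [le_abs_self t]])
    rw [Real.norm_eq_abs] at this
    nlinarith [abs_nonneg t, le_max_left C0 (0:ℝ)]
  · have ht0 : t ≠ 0 := by intro h0; rw [h0] at h; simp at h; linarith
    rcases abs_cases t with ⟨he, _⟩ | ⟨he, _⟩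
    · have : T1 ≤ t := by rw [he] at h; have : T1 ≤ max (max T1 (-T2)) 0 := le_max_of_le_left (le_max_left _ _); linarith
      have := key t ht0 (hT1 t this)
      nlinarith [le_max_right C0 (0:ℝ)]
    · have : t ≤ T2 := by
        have h' : -t > T := by rw [he] at h; linarith
        have : -T2 ≤ max (max T1 (-T2)) 0 := le_max_of_le_left (le_max_right _ _)
        linarith
      have := key t ht0 (hT2 t this)
      nlinarith [le_max_right C0 (0:ℝ)]



lemma aux_voc (k r x : ℕ → ℝ) (ξ : ℝ) (h : ℕ → ℝ)
    (hres : IsResolvent k r) (hx0 : x 0 = ξ)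
    (hx : ∀ n, x (n + 1) = h (n + 1) + ∑ j ∈ Finset.range (n + 1), k (n - j) * x j) :
    ∀ n, x n = r n * ξ + ∑ l ∈ Finset.range n, r (n - 1 - l) * h (l + 1) := by
  intro n
  induction n using Nat.strong_induction_on with
  | _ n IH =>
    match n with
    | 0 => simp [hx0, hres.1]
    | Nat.succ n =>
      rw [hx n]
      have step : ∀ j ∈ Finset.range (n+1), k (n - j) * x j
          = k (n - j) * (r j * ξ) + ∑ l ∈ Finset.range j, k (n - j) * (r (j - 1 - l) * h (l + 1)) := by
        intro j hj
        rw [IH j (by simpa using hj)]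
        rw [mul_add, Finset.mul_sum]
      rw [Finset.sum_congr rfl step, Finset.sum_add_distrib]
      have e1 : ∑ j ∈ Finset.range (n+1), k (n - j) * (r j * ξ) = r (n+1) * ξ := by
        rw [hres.2 n, Finset.sum_mul]
        exact Finset.sum_congr rfl (fun j hj => by ring)
      rw [e1]
      have e2 : ∑ j ∈ Finset.range (n+1), ∑ l ∈ Finset.range j, k (n - j) * (r (j - 1 - l) * h (l + 1))
          = ∑ l ∈ Finset.range (n+1), ∑ j ∈ Finset.Ico (l+1) (n+1), k (n - j) * (r (j - 1 - l) * h (l + 1)) := by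
        simp only [Finset.range_eq_Ico]
        rw [← Finset.sum_Ico_Ico_comm' 0 (n+1) (fun l j => k (n - j) * (r (j - 1 - l) * h (l + 1)))]
      rw [e2, Finset.sum_range_succ, Finset.Ico_self, Finset.sum_empty, add_zero]
      have e3 : ∀ l ∈ Finset.range n, ∑ j ∈ Finset.Ico (l+1) (n+1), k (n - j) * (r (j - 1 - l) * h (l + 1))
          = r (n - l) * h (l + 1) := by
        intro l hl
        have hln : l < n := Finset.mem_range.mp hl
        rw [Finset.sum_Ico_eq_sum_range]
        have hnl : n + 1 - (l + 1) = n - l := by omega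
        rw [hnl]
        have e : ∀ m ∈ Finset.range (n - l), k (n - (l + 1 + m)) * (r (l + 1 + m - 1 - l) * h (l + 1))
            = (k (n - l - 1 - m) * r m) * h (l + 1) := by
          intro m hm
          have h1 : n - (l + 1 + m) = n - l - 1 - m := by omega
          have h2 : l + 1 + m - 1 - l = m := by omega
          rw [h1, h2]; ring
        rw [Finset.sum_congr rfl e, ← Finset.sum_mul]
        congr 1
        have hh : (n - l - 1) + 1 = n - l := by omega
        have hr := hres.2 (n - l - 1)
        rw [hh] at hr
        exact hr.symm
      rw [Finset.sum_congr rfl e3, Finset.sum_range_succ]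
      have : (n + 1) - 1 - n = 0 := by omega
      rw [this, hres.1]
      have e5 : ∀ l ∈ Finset.range n, r ((n+1) - 1 - l) * h (l + 1) = r (n - l) * h (l+1) := by
        intro l hl; congr 2
      rw [Finset.sum_congr rfl e5]
      ring

lemma aux_conv (a : ℕ → ℝ) (ha : Monotone a) (ha' : Tendsto a atTop atTop)
    (c : ℕ → ℝ) (hc0 : ∀ i, 0 ≤ c i) (hcs : Summable c)
    (u : ℕ → ℝ) (hu0 : ∀ j, 0 ≤ u j) (Λ C : ℝ) (hΛ : 0 ≤ Λ) (hC : 0 ≤ C)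
    (hu : ∀ᶠ j in atTop, u j ≤ Λ * a (j + 1) + C) {ε : ℝ} (hε : 0 < ε) :
    ∀ᶠ m in atTop, ∑ j ∈ Finset.range m, c (m - 1 - j) * u j
      ≤ ((∑' i, c i) * Λ + ε) * a m := by
  obtain ⟨N, hN⟩ := eventually_atTop.mp hu
  set S := ∑' i, c i with hS
  have hS0 : 0 ≤ S := tsum_nonneg hc0
  set A := ∑ j ∈ Finset.range N, u j with hA
  have hA0 : 0 ≤ A := Finset.sum_nonneg (fun j _ => hu0 j)
  have hev1 : ∀ᶠ m in atTop, S * (C + A) ≤ ε * a m := by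
    have : Tendsto (fun m => ε * a m) atTop atTop := ha'.const_mul_atTop hε
    exact this.eventually_ge_atTop _
  have hev2 : ∀ᶠ m in atTop, 0 ≤ a m := ha'.eventually_ge_atTop 0
  filter_upwards [hev1, hev2, eventually_ge_atTop N] with m h1 h2 h3
  have key : ∀ j ∈ Finset.range m, c (m - 1 - j) * u j ≤ c (m - 1 - j) * (Λ * a m + (C + A)) := by
    intro j hj
    have hjm : j < m := Finset.mem_range.mp hj
    refine mul_le_mul_of_nonneg_left ?_ (hc0 _)
    rcases le_or_gt N j with hNj | hjN
    · have := hN j hNj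
      have haj : a (j + 1) ≤ a m := ha hjm
      nlinarith
    · have : u j ≤ A := Finset.single_le_sum (fun i _ => hu0 i) (Finset.mem_range.mpr hjN)
      nlinarith [mul_nonneg hΛ h2]
  calc ∑ j ∈ Finset.range m, c (m - 1 - j) * u j
      ≤ ∑ j ∈ Finset.range m, c (m - 1 - j) * (Λ * a m + (C + A)) := Finset.sum_le_sum key
    _ = (∑ j ∈ Finset.range m, c j) * (Λ * a m + (C + A)) := by
        rw [← Finset.sum_mul, Finset.sum_range_reflect (fun j => c j) m]
    _ ≤ S * (Λ * a m + (C + A)) := by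
        refine mul_le_mul_of_nonneg_right (Summable.sum_le_tsum _ (fun i _ => hc0 i) hcs) ?_
        nlinarith [mul_nonneg hΛ h2]
    _ = S * Λ * a m + S * (C + A) := by ring
    _ ≤ S * Λ * a m + ε * a m := by linarith
    _ = (S * Λ + ε) * a m := by ring



lemma aux_lam_nonneg (a y : ℕ → ℝ) (ha' : Tendsto a atTop atTop) : 0 ≤ Lam a y := by
  refine le_limsup_of_frequently_le ?_
  refine Eventually.frequently ?_
  filter_upwards [ha'.eventually_ge_atTop 1] with n hn
  have : (0:ℝ) ≤ |y n| / a n := div_nonneg (abs_nonneg _) (by linarith)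
  exact_mod_cast this

lemma aux_lam_zero (a y : ℕ → ℝ) (ha' : Tendsto a atTop atTop) :
    Lam a y = 0 ↔ ∀ ε : ℝ, 0 < ε → ∀ᶠ n in atTop, |y n| ≤ ε * a n := by
  constructor
  · intro h ε hε
    have hlt : Lam a y < (ε : EReal) := by rw [h]; exact_mod_cast hε
    have := eventually_lt_of_limsup_lt hlt
    filter_upwards [this, ha'.eventually_ge_atTop 1] with n h1 h2
    have h1' : |y n| / a n < ε := by exact_mod_cast h1
    have ha0 : 0 < a n := by linarith
    calc |y n| = |y n| / a n * a n := by field_simp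
    _ ≤ ε * a n := mul_le_mul_of_nonneg_right h1'.le (by linarith)
  · intro h
    refine le_antisymm ?_ (aux_lam_nonneg a y ha')
    have key : ∀ z : ℝ, 0 < z → Lam a y ≤ (z : EReal) := by
      intro z hz
      refine limsup_le_of_le (by isBoundedDefault) ?_
      filter_upwards [h z hz, ha'.eventually_ge_atTop 1] with n h1 h2
      have ha0 : 0 < a n := by linarith
      have : |y n| / a n ≤ z := (div_le_iff₀ ha0).mpr (by linarith [h1])
      exact_mod_cast this
    by_contra hc
    push_neg at hc
    obtain ⟨z, hz1, hz2⟩ := EReal.exists_between_coe_real hc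
    have hz0 : (0:ℝ) < z := by exact_mod_cast hz1
    exact absurd (key z hz0) (not_le.mpr hz2)

lemma aux_lam_top (a y : ℕ → ℝ) (ha' : Tendsto a atTop atTop) :
    Lam a y < ⊤ ↔ ∃ Λ : ℝ, 0 ≤ Λ ∧ ∀ᶠ n in atTop, |y n| ≤ Λ * a n := by
  constructor
  · intro h
    obtain ⟨z, hz1, hz2⟩ := EReal.exists_between_coe_real h
    refine ⟨max z 0, le_max_right _ _, ?_⟩
    filter_upwards [eventually_lt_of_limsup_lt hz1, ha'.eventually_ge_atTop 1] with n h1 h2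
    have h1' : |y n| / a n < z := by exact_mod_cast h1
    have ha0 : 0 < a n := by linarith
    calc |y n| = |y n| / a n * a n := by field_simp
    _ ≤ max z 0 * a n := mul_le_mul_of_nonneg_right (h1'.le.trans (le_max_left _ _)) (by linarith)
  · rintro ⟨Λ, hΛ0, hΛ⟩
    refine lt_of_le_of_lt (limsup_le_of_le (by isBoundedDefault) ?_) (EReal.coe_lt_top Λ)
    filter_upwards [hΛ, ha'.eventually_ge_atTop 1] with n h1 h2
    have ha0 : 0 < a n := by linarith
    have : |y n| / a n ≤ Λ := (div_le_iff₀ ha0).mpr (by linarith)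
    exact_mod_cast this

set_option maxHeartbeats 1000000 in
lemma aux_fin (k r H x hs a : ℕ → ℝ) (ξ : ℝ)
    (hk : Summable fun j => |k j|) (hrs : Summable fun j => |r j|)
    (ha : Monotone a) (ha' : Tendsto a atTop atTop)
    (δ C ΛH : ℝ) (hδ : 0 ≤ δ) (hC : 0 ≤ C) (hΛH : 0 ≤ ΛH)
    (hθ : δ * ((∑' i, |r i|) * (∑' i, |k i|)) ≤ 1/2)
    (hbH : ∀ᶠ n in atTop, |H n| ≤ ΛH * a n)
    (hvoc : ∀ n, x n = r n * ξ + ∑ l ∈ Finset.range n, r (n - 1 - l) * hs (l + 1))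
    (hhs : ∀ m : ℕ, |hs (m+1)| ≤ |H (m+1)| + ∑ j ∈ Finset.range (m+1), |k (m - j)| * (δ * |x j| + C)) :
    ∃ W : ℝ, 0 ≤ W ∧ ∀ᶠ n in atTop, |x n| ≤ W * a n := by
  set R := ∑' i, |r i| with hR
  set K := ∑' i, |k i| with hK
  have hR0 : 0 ≤ R := tsum_nonneg (fun i => abs_nonneg _)
  have hK0 : 0 ≤ K := tsum_nonneg (fun i => abs_nonneg _)
  have hrb : ∀ m, |r m| ≤ R := fun m => Summable.le_tsum hrs m (fun i _ => abs_nonneg _)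
  obtain ⟨n1, hn1⟩ := eventually_atTop.mp ((ha'.eventually_ge_atTop 1).and hbH)
  set AH := ∑ m ∈ Finset.range n1, |H m| with hAH
  set AX := ∑ j ∈ Finset.range n1, |x j| with hAX
  have hAH0 : 0 ≤ AH := Finset.sum_nonneg (fun _ _ => abs_nonneg _)
  have hAX0 : 0 ≤ AX := Finset.sum_nonneg (fun _ _ => abs_nonneg _)
  set B0 := R * |ξ| + R * AH + R * K * (δ * AX + C) with hB0
  have hB00 : 0 ≤ B0 := by positivity
  set W := 2 * (R * ΛH + B0) with hW
  have hW0 : 0 ≤ W := by positivity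
  refine ⟨W, hW0, ?_⟩
  rw [eventually_atTop]
  refine ⟨n1, ?_⟩
  intro n
  induction n using Nat.strong_induction_on with
  | _ n IH =>
    intro hn
    have han : 1 ≤ a n := (hn1 n hn).1
    have hxj : ∀ j, j < n → |x j| ≤ W * a n + AX := by
      intro j hj
      rcases lt_or_ge j n1 with hj1 | hj1
      · have : |x j| ≤ AX := Finset.single_le_sum (fun i _ => abs_nonneg (x i)) (Finset.mem_range.mpr hj1)
        nlinarith
      · have h1 := IH j hj hj1
        have h2 : a j ≤ a n := ha hj.le
        nlinarith
    have hHl : ∀ l, l < n → |H (l+1)| ≤ ΛH * a n + AH := by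
      intro l hl
      rcases lt_or_ge (l+1) n1 with hl1 | hl1
      · have : |H (l+1)| ≤ AH := Finset.single_le_sum (fun i _ => abs_nonneg (H i)) (Finset.mem_range.mpr hl1)
        nlinarith
      · have h1 := (hn1 (l+1) hl1).2
        have h2 : a (l+1) ≤ a n := ha hl
        nlinarith
    have han0 : (0:ℝ) ≤ a n := by linarith
    set D : ℝ := (ΛH * a n + AH) + K * (δ * (W * a n + AX) + C) with hD
    have hwx : (0:ℝ) ≤ W * a n + AX := by have := mul_nonneg hW0 han0; linarith
    have hbound0 : (0:ℝ) ≤ δ * (W * a n + AX) + C := by have := mul_nonneg hδ hwx; linarith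
    have hD0 : 0 ≤ D := by have h1 := mul_nonneg hΛH han0; have h2 := mul_nonneg hK0 hbound0; rw [hD]; linarith
    have hhsl : ∀ l, l < n → |hs (l+1)| ≤ D := by
      intro l hl
      refine (hhs l).trans ?_
      have inner : ∑ j ∈ Finset.range (l+1), |k (l - j)| * (δ * |x j| + C)
          ≤ ∑ j ∈ Finset.range (l+1), |k (l - j)| * (δ * (W * a n + AX) + C) := by
        refine Finset.sum_le_sum (fun j hj => ?_)
        have hjl : j < l + 1 := Finset.mem_range.mp hj
        have := hxj j (by omega)
        refine mul_le_mul_of_nonneg_left (by nlinarith) (abs_nonneg _)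
      have reflect : ∑ j ∈ Finset.range (l+1), |k (l - j)| * (δ * (W * a n + AX) + C)
          = (∑ j ∈ Finset.range (l+1), |k j|) * (δ * (W * a n + AX) + C) := by
        rw [← Finset.sum_mul]
        congr 1
        have h := Finset.sum_range_reflect (fun j => |k j|) (l+1)
        simpa using h
      have hkK : ∑ j ∈ Finset.range (l+1), |k j| ≤ K := Summable.sum_le_tsum _ (fun i _ => abs_nonneg _) hk
      have := hHl l hl
      nlinarith [inner, reflect, mul_le_mul_of_nonneg_right hkK hbound0]
    have hsum : ∑ l ∈ Finset.range n, |r (n - 1 - l) * hs (l + 1)| ≤ R * D := by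
      have : ∀ l ∈ Finset.range n, |r (n - 1 - l) * hs (l + 1)| ≤ |r (n - 1 - l)| * D := by
        intro l hl
        rw [abs_mul]
        exact mul_le_mul_of_nonneg_left (hhsl l (Finset.mem_range.mp hl)) (abs_nonneg _)
      refine (Finset.sum_le_sum this).trans ?_
      rw [← Finset.sum_mul, Finset.sum_range_reflect (fun l => |r l|) n]
      exact mul_le_mul_of_nonneg_right (Summable.sum_le_tsum _ (fun i _ => abs_nonneg _) hrs) hD0
    have hxn : |x n| ≤ R * |ξ| + R * D := by
      rw [hvoc n]
      refine (abs_add_le _ _).trans ?_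
      refine add_le_add ?_ ((Finset.abs_sum_le_sum_abs _ _).trans hsum)
      rw [abs_mul]
      exact mul_le_mul_of_nonneg_right (hrb n) (abs_nonneg _)
    have key : R * K * δ * W ≤ R * ΛH + B0 := by
      nlinarith [mul_nonneg (by linarith : (0:ℝ) ≤ 1/2 - δ * (R * K)) hW0]
    have key' : R * K * δ * W * a n ≤ (R * ΛH + B0) * a n := mul_le_mul_of_nonneg_right key han0
    have hB0an : B0 ≤ B0 * a n := by nlinarith [mul_nonneg hB00 (by linarith : (0:ℝ) ≤ a n - 1)]
    have expand : R * |ξ| + R * D = R * ΛH * a n + R * K * δ * W * a n + B0 := by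
      rw [hD, hB0]; ring
    rw [expand] at hxn
    have hWan : W * a n = 2 * (R * ΛH) * a n + 2 * B0 * a n := by rw [hW]; ring
    nlinarith [hxn, key', hB0an, hWan]
set_option maxHeartbeats 1000000 in
lemma aux_refine (k r H x hs gx a : ℕ → ℝ) (ξ : ℝ)
    (hk : Summable fun j => |k j|) (hrs : Summable fun j => |r j|)
    (ha : Monotone a) (ha' : Tendsto a atTop atTop)
    (δ C ΛH Λx : ℝ) (hδ : 0 ≤ δ) (hC : 0 ≤ C) (hΛH : 0 ≤ ΛH) (hΛx : 0 ≤ Λx)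
    (hbH : ∀ᶠ n in atTop, |H n| ≤ ΛH * a n) (hbx : ∀ᶠ n in atTop, |x n| ≤ Λx * a n)
    (hg : ∀ j, |gx j| ≤ δ * |x j| + C)
    (hvoc : ∀ n, x n = r n * ξ + ∑ l ∈ Finset.range n, r (n - 1 - l) * hs (l + 1))
    (hhs : ∀ m : ℕ, |hs (m+1)| ≤ |H (m+1)| + ∑ j ∈ Finset.range (m+1), |k (m - j)| * |gx j|)
    {ε : ℝ} (hε : 0 < ε) :
    ∀ᶠ n in atTop, |x n| ≤ ((∑' i, |r i|) * ΛH + δ * ((∑' i, |r i|) * (∑' i, |k i|)) * Λx + ε) * a n := by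
  set R := ∑' i, |r i| with hR
  set K := ∑' i, |k i| with hK
  have hR0 : 0 ≤ R := tsum_nonneg (fun i => abs_nonneg _)
  have hK0 : 0 ≤ K := tsum_nonneg (fun i => abs_nonneg _)
  set ε' := ε / (R + 2) with hε'
  have hε'0 : 0 < ε' := by positivity
  -- step 1 : convolution with k of |gx|
  have hu1 : ∀ᶠ j in atTop, |gx j| ≤ (δ * Λx) * a (j + 1) + C := by
    filter_upwards [hbx, ha'.eventually_ge_atTop 0] with j h1 h2
    have haj : a j ≤ a (j+1) := ha (Nat.le_succ j)
    have h4 := hg j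
    have h5 : δ * |x j| ≤ δ * (Λx * a j) := mul_le_mul_of_nonneg_left h1 hδ
    have h6 : (δ * Λx) * a j ≤ (δ * Λx) * a (j+1) :=
      mul_le_mul_of_nonneg_left haj (mul_nonneg hδ hΛx)
    nlinarith [h4, h5, h6]
  have step1 := aux_conv a ha ha' (fun i => |k i|) (fun i => abs_nonneg _) hk
    (fun j => |gx j|) (fun j => abs_nonneg _) (δ * Λx) C (mul_nonneg hδ hΛx) hC hu1 hε'0
  -- step 2 : bound |hs (m+1)|
  have step2 : ∀ᶠ m in atTop, |hs (m + 1)| ≤ (ΛH + K * (δ * Λx) + ε') * a (m + 1) := by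
    obtain ⟨M1, hM1⟩ := eventually_atTop.mp step1
    obtain ⟨M2, hM2⟩ := eventually_atTop.mp hbH
    rw [eventually_atTop]
    refine ⟨max M1 M2, fun m hm => ?_⟩
    have h1 := hM1 (m+1) (by omega)
    have h2 := hM2 (m+1) (by omega)
    have h3 : ∑ j ∈ Finset.range (m+1), |k (m + 1 - 1 - j)| * |gx j|
        = ∑ j ∈ Finset.range (m+1), |k (m - j)| * |gx j| := by
      simp [Nat.add_sub_cancel]
    rw [h3] at h1
    have := hhs m
    nlinarith [this, h1, h2]
  have step3 := aux_conv a ha ha' (fun i => |r i|) (fun i => abs_nonneg _) hrs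
    (fun l => |hs (l + 1)|) (fun l => abs_nonneg _) (ΛH + K * (δ * Λx) + ε') 0
    (by positivity) le_rfl (by filter_upwards [step2] with l h; linarith) hε'0
  have step4 : ∀ᶠ n in atTop, |r n * ξ| ≤ ε' * a n := by
    have hrb : ∀ m, |r m| ≤ R := fun m => Summable.le_tsum hrs m (fun i _ => abs_nonneg _)
    filter_upwards [ha'.eventually_ge_atTop ((R * |ξ|) / ε')] with n hn
    rw [abs_mul]
    have h1 : |r n| * |ξ| ≤ R * |ξ| := mul_le_mul_of_nonneg_right (hrb n) (abs_nonneg _)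
    have h2 : R * |ξ| ≤ ε' * a n := by
      rw [div_le_iff₀ hε'0] at hn; linarith [hn]
    linarith
  filter_upwards [step3, step4, ha'.eventually_ge_atTop 0] with n h3 h4 h5
  have hx1 : |x n| ≤ |r n * ξ| + ∑ l ∈ Finset.range n, |r (n - 1 - l)| * |hs (l + 1)| := by
    rw [hvoc n]
    refine (abs_add_le _ _).trans (add_le_add le_rfl ?_)
    refine (Finset.abs_sum_le_sum_abs _ _).trans ?_
    exact le_of_eq (Finset.sum_congr rfl (fun l _ => abs_mul _ _))
  have h3' : ∑ l ∈ Finset.range n, |r (n - 1 - l)| * |hs (l + 1)|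
      ≤ (R * (ΛH + K * (δ * Λx) + ε') + ε') * a n := by
    have := h3
    simpa using this
  have expand : (R * (ΛH + K * (δ * Λx) + ε') + ε') + ε' = R * ΛH + δ * (R * K) * Λx + (R + 2) * ε' := by ring
  have hfinal : (R + 2) * ε' = ε := by rw [hε']; field_simp
  nlinarith [hx1, h3', h4, mul_nonneg (show (0:ℝ) ≤ (R+2)*ε' by positivity) h5]

lemma aux_Hbound (k H x fx a : ℕ → ℝ)
    (hk : Summable fun j => |k j|)
    (ha : Monotone a) (ha' : Tendsto a atTop atTop)
    (δ C Λx : ℝ) (hδ : 0 ≤ δ) (hC : 0 ≤ C) (hΛx : 0 ≤ Λx)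
    (hf : ∀ j, |fx j| ≤ (1 + δ) * |x j| + C)
    (hbx : ∀ᶠ n in atTop, |x n| ≤ Λx * a n)
    (heq : ∀ n : ℕ, H (n+1) = x (n+1) - ∑ j ∈ Finset.range (n+1), k (n - j) * fx j)
    {ε : ℝ} (hε : 0 < ε) :
    ∀ᶠ m in atTop, |H m| ≤ (Λx + (∑' i, |k i|) * ((1 + δ) * Λx) + ε) * a m := by
  have hu : ∀ᶠ j in atTop, |fx j| ≤ ((1 + δ) * Λx) * a (j + 1) + C := by
    filter_upwards [hbx, ha'.eventually_ge_atTop 0] with j h1 h2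
    have haj : a j ≤ a (j + 1) := ha (Nat.le_succ j)
    have h4 := hf j
    have h5 : (1 + δ) * |x j| ≤ (1 + δ) * (Λx * a j) :=
      mul_le_mul_of_nonneg_left h1 (by linarith)
    have h6 : ((1 + δ) * Λx) * a j ≤ ((1 + δ) * Λx) * a (j + 1) :=
      mul_le_mul_of_nonneg_left haj (by positivity)
    nlinarith [h4, h5, h6]
  have hε2 : 0 < ε / 2 := by linarith
  have step := aux_conv a ha ha' (fun i => |k i|) (fun i => abs_nonneg _) hk
    (fun j => |fx j|) (fun j => abs_nonneg _) ((1 + δ) * Λx) C (by positivity) hC hu hε2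
  obtain ⟨M1, hM1⟩ := eventually_atTop.mp step
  obtain ⟨M2, hM2⟩ := eventually_atTop.mp (hbx.and (ha'.eventually_ge_atTop 0))
  rw [eventually_atTop]
  refine ⟨max (max M1 M2) 1, fun m hm => ?_⟩
  obtain ⟨n, rfl⟩ : ∃ n, m = n + 1 := ⟨m - 1, by omega⟩
  have h1 := hM1 (n+1) (by omega)
  have h2 := (hM2 (n+1) (by omega)).1
  have h3 := (hM2 (n+1) (by omega)).2
  have hsum : ∑ j ∈ Finset.range (n+1), |k (n + 1 - 1 - j)| * |fx j|
      = ∑ j ∈ Finset.range (n+1), |k (n - j)| * |fx j| := by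
    simp [Nat.add_sub_cancel]
  rw [hsum] at h1
  have hH1 : |H (n+1)| ≤ |x (n+1)| + ∑ j ∈ Finset.range (n+1), |k (n - j)| * |fx j| := by
    rw [heq n]
    refine (abs_sub _ _).trans (add_le_add le_rfl ?_)
    refine (Finset.abs_sum_le_sum_abs _ _).trans ?_
    exact le_of_eq (Finset.sum_congr rfl (fun j _ => abs_mul _ _))
  nlinarith [hH1, h1, h2, h3, mul_nonneg (le_of_lt hε2) h3]
set_option maxHeartbeats 2000000 in
theorem stmt19 (k r H x : ℕ → ℝ) (f : ℝ → ℝ) (ξ : ℝ)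
    (hk : Summable fun j => |k j|)
    (hres : IsResolvent k r) (hrs : Summable fun j => |r j|)
    (hfcont : Continuous f)
    (hftop : Tendsto (fun t : ℝ => f t / t) atTop (nhds 1))
    (hfbot : Tendsto (fun t : ℝ => f t / t) atBot (nhds 1))
    (hx0 : x 0 = ξ)
    (hx : ∀ n : ℕ,
      x (n + 1) = H (n + 1) + ∑ j ∈ Finset.range (n + 1), k (n - j) * f (x j))
    (a : ℕ → ℝ) (ha : StrictMono a) (ha' : Tendsto a atTop atTop) :
    (Lam a x = 0 ↔ Lam a H = 0) ∧
    ((0 < Lam a x ∧ Lam a x < ⊤) ↔ (0 < Lam a H ∧ Lam a H < ⊤)) ∧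
    (Lam a x = ⊤ ↔ Lam a H = ⊤) := by
  classical
  have hamono : Monotone a := ha.monotone
  set R := ∑' i, |r i| with hRdef
  set K := ∑' i, |k i| with hKdef
  have hR0 : 0 ≤ R := tsum_nonneg fun i => abs_nonneg _
  have hK0 : 0 ≤ K := tsum_nonneg fun i => abs_nonneg _
  set δ : ℝ := 1 / (2 * (R * K + 1)) with hδdef
  have hδ0 : 0 < δ := by positivity
  have hθ : δ * (R * K) ≤ 1 / 2 := by
    rw [hδdef, div_mul_eq_mul_div, one_mul, div_le_div_iff₀ (by positivity) (by norm_num)]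
    nlinarith [mul_nonneg hR0 hK0]
  obtain ⟨C, hC0, hgC⟩ := aux_sublinear f hfcont hftop hfbot hδ0
  set hs : ℕ → ℝ := fun m => H m + ∑ j ∈ Finset.range m, k (m - 1 - j) * (f (x j) - x j)
    with hhsdef
  have hxrec : ∀ n, x (n + 1) = hs (n + 1) + ∑ j ∈ Finset.range (n + 1), k (n - j) * x j := by
    intro n
    have e1 : ∑ j ∈ Finset.range (n+1), k (n - j) * f (x j)
        = ∑ j ∈ Finset.range (n+1), (k (n - j) * (f (x j) - x j) + k (n - j) * x j) :=
      Finset.sum_congr rfl fun j _ => by ring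
    rw [hx n, e1, Finset.sum_add_distrib, hhsdef]
    simp only [Nat.add_sub_cancel]
    ring
  have hvoc := aux_voc k r x ξ hs hres hx0 hxrec
  have habs_hs : ∀ m : ℕ, |hs (m+1)| ≤ |H (m+1)|
      + ∑ j ∈ Finset.range (m+1), |k (m - j)| * |f (x j) - x j| := by
    intro m
    rw [hhsdef]
    simp only [Nat.add_sub_cancel]
    refine (abs_add_le _ _).trans (add_le_add le_rfl ?_)
    refine (Finset.abs_sum_le_sum_abs _ _).trans ?_
    exact le_of_eq (Finset.sum_congr rfl fun j _ => abs_mul _ _)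
  have hhs_fin : ∀ m : ℕ, |hs (m+1)| ≤ |H (m+1)|
      + ∑ j ∈ Finset.range (m+1), |k (m - j)| * (δ * |x j| + C) := by
    intro m
    refine (habs_hs m).trans (add_le_add le_rfl (Finset.sum_le_sum fun j _ => ?_))
    exact mul_le_mul_of_nonneg_left (hgC (x j)) (abs_nonneg _)
  have hfin : ∀ ΛH : ℝ, 0 ≤ ΛH → (∀ᶠ n in atTop, |H n| ≤ ΛH * a n) →
      ∃ W : ℝ, 0 ≤ W ∧ ∀ᶠ n in atTop, |x n| ≤ W * a n := by
    intro ΛH h0 hb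
    exact aux_fin k r H x hs a ξ hk hrs hamono ha' δ C ΛH hδ0.le hC0 h0 hθ hb hvoc hhs_fin
  have hrefine : ∀ ΛH Λx : ℝ, 0 ≤ ΛH → 0 ≤ Λx →
      (∀ᶠ n in atTop, |H n| ≤ ΛH * a n) → (∀ᶠ n in atTop, |x n| ≤ Λx * a n) →
      ∀ ε : ℝ, 0 < ε →
      ∀ᶠ n in atTop, |x n| ≤ (R * ΛH + δ * (R * K) * Λx + ε) * a n := by
    intro ΛH Λx h0 h1 hbH hbx ε hε
    exact aux_refine k r H x hs (fun j => f (x j) - x j) a ξ hk hrs hamono ha' δ C ΛH Λx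
      hδ0.le hC0 h0 h1 hbH hbx (fun j => hgC (x j)) hvoc habs_hs hε
  have hfb : ∀ j : ℕ, |f (x j)| ≤ (1 + δ) * |x j| + C := by
    intro j
    have h1 := hgC (x j)
    have h2 : |f (x j)| ≤ |f (x j) - x j| + |x j| := by
      calc |f (x j)| = |(f (x j) - x j) + x j| := by ring_nf
      _ ≤ |f (x j) - x j| + |x j| := abs_add_le _ _
    nlinarith
  have heqH : ∀ n : ℕ, H (n+1) = x (n+1) - ∑ j ∈ Finset.range (n+1), k (n - j) * f (x j) := by
    intro n; rw [hx n]; ring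
  have hHb : ∀ Λx : ℝ, 0 ≤ Λx → (∀ᶠ n in atTop, |x n| ≤ Λx * a n) → ∀ ε : ℝ, 0 < ε →
      ∀ᶠ m in atTop, |H m| ≤ (Λx + K * ((1 + δ) * Λx) + ε) * a m := by
    intro Λx h0 hb ε hε
    exact aux_Hbound k H x (fun j => f (x j)) a hk hamono ha' δ C Λx hδ0.le hC0 h0 hfb hb heqH hε
  -- the four implications
  have hI3 : (∃ Λ : ℝ, 0 ≤ Λ ∧ ∀ᶠ n in atTop, |x n| ≤ Λ * a n) →
      (∃ Λ : ℝ, 0 ≤ Λ ∧ ∀ᶠ n in atTop, |H n| ≤ Λ * a n) := by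
    rintro ⟨Λ, h0, hb⟩
    exact ⟨Λ + K * ((1 + δ) * Λ) + 1, by positivity, hHb Λ h0 hb 1 one_pos⟩
  have hI1 : (∃ Λ : ℝ, 0 ≤ Λ ∧ ∀ᶠ n in atTop, |H n| ≤ Λ * a n) →
      (∃ Λ : ℝ, 0 ≤ Λ ∧ ∀ᶠ n in atTop, |x n| ≤ Λ * a n) := by
    rintro ⟨Λ, h0, hb⟩
    exact hfin Λ h0 hb
  have hI4 : (∀ ε : ℝ, 0 < ε → ∀ᶠ n in atTop, |x n| ≤ ε * a n) →
      (∀ ε : ℝ, 0 < ε → ∀ᶠ n in atTop, |H n| ≤ ε * a n) := by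
    intro hX ε hε
    have hd0 : (0:ℝ) < 1 + K * (1 + δ) := by positivity
    set Λx := ε / (2 * (1 + K * (1 + δ))) with hΛxdef
    have hΛx0 : 0 < Λx := by positivity
    have := hHb Λx hΛx0.le (hX Λx hΛx0) (ε/2) (by linarith)
    have hcoef : Λx + K * ((1 + δ) * Λx) + ε/2 = ε := by
      rw [hΛxdef]; field_simp; ring
    rw [hcoef] at this
    exact this
  have hI2 : (∀ ε : ℝ, 0 < ε → ∀ᶠ n in atTop, |H n| ≤ ε * a n) →
      (∀ ε : ℝ, 0 < ε → ∀ᶠ n in atTop, |x n| ≤ ε * a n) := by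
    intro hH ε hε
    have hΛH0 : (0:ℝ) < ε / (8 * (R + 1)) := by positivity
    set ΛH := ε / (8 * (R + 1)) with hΛHdef
    have hevH := hH ΛH hΛH0
    obtain ⟨W, hW0, hWev⟩ := hfin ΛH hΛH0.le hevH
    have hε'0 : (0:ℝ) < ε / 8 := by positivity
    have hind : ∀ m : ℕ, ∀ᶠ n in atTop,
        |x n| ≤ (2 * (R * ΛH + ε / 8) + (1/2)^m * W) * a n := by
      intro m
      induction m with
      | zero =>
        filter_upwards [hWev, ha'.eventually_ge_atTop 0] with n h1 h2
        have h3 : (0:ℝ) ≤ 2 * (R * ΛH + ε / 8) := by positivity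
        have h4 := mul_nonneg h3 h2
        rw [pow_zero]
        nlinarith
      | succ m ih =>
        have hcoef0 : (0:ℝ) ≤ 2 * (R * ΛH + ε / 8) + (1/2)^m * W := by positivity
        have step := hrefine ΛH _ hΛH0.le hcoef0 hevH ih (ε/8) hε'0
        filter_upwards [step, ha'.eventually_ge_atTop 0] with n h1 h2
        have hp : (0:ℝ) ≤ (1/2:ℝ)^m * W := by positivity
        have hq : (0:ℝ) ≤ 2 * (R * ΛH + ε / 8) := by positivity
        have h5 : δ * (R * K) * (2 * (R * ΛH + ε / 8)) ≤ (1/2) * (2 * (R * ΛH + ε/8)) :=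
          mul_le_mul_of_nonneg_right hθ hq
        have h6 : δ * (R * K) * ((1/2)^m * W) ≤ (1/2) * ((1/2)^m * W) :=
          mul_le_mul_of_nonneg_right hθ hp
        have hps : (1/2:ℝ)^(m+1) = (1/2)^m * (1/2) := pow_succ _ _
        have harith : R * ΛH + δ * (R * K) * (2 * (R * ΛH + ε / 8) + (1/2)^m * W) + ε / 8
            ≤ 2 * (R * ΛH + ε / 8) + (1/2)^(m+1) * W := by
          have hd : δ * (R * K) * (2 * (R * ΛH + ε / 8) + (1/2)^m * W)
              = δ * (R * K) * (2 * (R * ΛH + ε / 8)) + δ * (R * K) * ((1/2)^m * W) := by ring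
          rw [hd, hps]; linarith
        nlinarith [mul_le_mul_of_nonneg_right harith h2]
    have htend : Tendsto (fun m : ℕ => (1/2:ℝ)^m * W) atTop (nhds 0) := by
      have h := tendsto_pow_atTop_nhds_zero_of_lt_one (by norm_num : (0:ℝ) ≤ 1/2)
        (by norm_num : (1/2:ℝ) < 1)
      simpa using h.mul_const W
    obtain ⟨m, hm⟩ := (htend.eventually_le_const (by positivity : (0:ℝ) < ε/4)).exists
    have hRΛH : R * ΛH ≤ ε / 8 := by
      rw [hΛHdef, ← mul_div_assoc, div_le_div_iff₀ (by positivity) (by norm_num : (0:ℝ) < 8)]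
      nlinarith [hR0, hε.le]
    filter_upwards [hind m, ha'.eventually_ge_atTop 0] with n h1 h2
    have hco : 2 * (R * ΛH + ε / 8) + (1/2)^m * W ≤ ε := by linarith
    nlinarith [mul_le_mul_of_nonneg_right hco h2]
  -- bridges
  have hZx := aux_lam_zero a x ha'
  have hZH := aux_lam_zero a H ha'
  have hTx := aux_lam_top a x ha'
  have hTH := aux_lam_top a H ha'
  have hNx := aux_lam_nonneg a x ha'
  have hNH := aux_lam_nonneg a H ha'
  have part1 : Lam a x = 0 ↔ Lam a H = 0 := by
    rw [hZx, hZH]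
    exact ⟨fun h => hI4 h, fun h => hI2 h⟩
  have part3 : Lam a x = ⊤ ↔ Lam a H = ⊤ := by
    constructor
    · intro h
      by_contra hc
      have : Lam a H < ⊤ := lt_top_iff_ne_top.mpr hc
      have : Lam a x < ⊤ := hTx.mpr (hI1 (hTH.mp this))
      rw [h] at this
      exact absurd this (lt_irrefl _)
    · intro h
      by_contra hc
      have : Lam a x < ⊤ := lt_top_iff_ne_top.mpr hc
      have : Lam a H < ⊤ := hTH.mpr (hI3 (hTx.mp this))
      rw [h] at this
      exact absurd this (lt_irrefl _)
  refine ⟨part1, ?_, part3⟩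
  constructor
  · rintro ⟨h1, h2⟩
    refine ⟨?_, hTH.mpr (hI3 (hTx.mp h2))⟩
    rcases lt_or_eq_of_le hNH with h | h
    · exact h
    · exfalso
      have : Lam a x = 0 := part1.mpr h.symm
      rw [this] at h1
      exact absurd h1 (lt_irrefl _)
  · rintro ⟨h1, h2⟩
    refine ⟨?_, hTx.mpr (hI1 (hTH.mp h2))⟩
    rcases lt_or_eq_of_le hNx with h | h
    · exact h
    · exfalso
      have : Lam a H = 0 := part1.mp h.symm
      rw [this] at h1
      exact absurd h1 (lt_irrefl _)
end
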